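/- arXiv:1907.05470 — 10 statements merged into one kernel-verified Lean document; each statement's English description precedes it below -/
import Mathlib

section
/- Let A be a k-algebra, and let ξ ∈ A ⊗ A satisfy (a ⊗ 1)·ξ = ξ·(1 ⊗ a) for all a ∈ A. Then the map Δ_ξ(x) = (x ⊗ 1)·ξ is coassociative: (Δ_ξ ⊗ id) ∘ Δ_ξ = (id ⊗ Δ_ξ) ∘ Δ_ξ. -/
open TensorProduct

/-- If `ξ ∈ A ⊗ A` satisfies `(a ⊗ 1)·ξ = ξ·(1 ⊗ a)` for all `a`, then the
linear map `Δ_ξ(x) = (x ⊗ 1)·ξ` is coassociative: `(Δ_ξ ⊗ id) ∘ Δ_ξ = (id ⊗ Δ_ξ) ∘ Δ_ξ`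
(comparing the two sides through the associator). -/
theorem deltaXi_coassoc (k : Type*) [Field k] (A : Type*) [Ring A] [Algebra k A]
    (ξ : A ⊗[k] A)
    (hξ : ∀ a : A, (a ⊗ₜ[k] (1 : A)) * ξ = ξ * ((1 : A) ⊗ₜ[k] a))
    (Δ : A →ₗ[k] A ⊗[k] A)
    (hΔ : ∀ x : A, Δ x = (x ⊗ₜ[k] (1 : A)) * ξ) :
    ∀ x : A,
      (TensorProduct.assoc k A A A) (LinearMap.rTensor A Δ (Δ x)) =
        LinearMap.lTensor A Δ (Δ x) := by
  intro x
  set η := Δ x with hη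
  -- `f η'` is the linear map `u ↦ η' * (1 ⊗ u)`
  let f : A ⊗[k] A → (A →ₗ[k] A ⊗[k] A) := fun η' =>
    (LinearMap.mulLeft k η').comp
      (Algebra.TensorProduct.includeRight : A →ₐ[k] A ⊗[k] A).toLinearMap
  have hf : ∀ (η' : A ⊗[k] A) (u : A), f η' u = η' * ((1 : A) ⊗ₜ[k] u) := fun _ _ => rfl
  have hfadd : ∀ (p q : A ⊗[k] A), f (p + q) = f p + f q := by
    intro p q
    ext u
    simp [hf, add_mul]
  have step1' : ∀ ζ : A ⊗[k] A,
      LinearMap.rTensor A Δ ((x ⊗ₜ[k] (1 : A)) * ζ) = LinearMap.rTensor A (f η) ζ := by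
    intro ζ
    induction ζ using TensorProduct.induction_on with
    | zero => simp
    | tmul u v =>
        rw [Algebra.TensorProduct.tmul_mul_tmul, one_mul, LinearMap.rTensor_tmul,
          LinearMap.rTensor_tmul]
        congr 1
        rw [hf, hΔ, hη, hΔ, hξ (x * u), hξ x, mul_assoc,
          Algebra.TensorProduct.tmul_mul_tmul, one_mul]
    | add p q hp hq =>
        rw [mul_add, map_add, map_add, hp, hq]
  have step2 : ∀ η' : A ⊗[k] A,
      LinearMap.lTensor A Δ η' =
        (TensorProduct.assoc k A A A) (LinearMap.rTensor A (f η') ξ) := by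
    intro η'
    induction η' using TensorProduct.induction_on with
    | zero =>
        have h0 : f (0 : A ⊗[k] A) = 0 := by ext u; simp [hf]
        rw [map_zero, h0, LinearMap.rTensor_zero, LinearMap.zero_apply, LinearEquiv.map_zero]
    | tmul a b =>
        rw [LinearMap.lTensor_tmul, hΔ]
        have aux : ∀ ζ : A ⊗[k] A,
            a ⊗ₜ[k] ((b ⊗ₜ[k] (1 : A)) * ζ) =
              (TensorProduct.assoc k A A A) (LinearMap.rTensor A (f (a ⊗ₜ[k] b)) ζ) := by
          intro ζ
          induction ζ using TensorProduct.induction_on with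
          | zero => rw [mul_zero, tmul_zero, map_zero, LinearEquiv.map_zero]
          | tmul u v =>
              rw [LinearMap.rTensor_tmul, hf, Algebra.TensorProduct.tmul_mul_tmul,
                Algebra.TensorProduct.tmul_mul_tmul, one_mul, mul_one,
                TensorProduct.assoc_tmul]
          | add p q hp hq =>
              rw [mul_add, tmul_add, map_add, map_add, hp, hq]
        exact aux ξ
    | add p q hp hq =>
        rw [map_add, hp, hq, hfadd, LinearMap.rTensor_add, LinearMap.add_apply, map_add]
  rw [hη, hΔ, step1', ← hΔ, ← hη, step2]
end

section
/- Let A be a k-algebra. The map e sending a nearly Frobenius coproduct Δ on A to the element Δ(1) ∈ A ⊗ A is a bijection between the set of nearly Frobenius coproducts on A and the set of invariants I(A ⊗ A) = { m ∈ A ⊗ A : a·m = m·a for all a ∈ A }. -/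
open TensorProduct

/-- A nearly Frobenius coproduct: a coassociative `k`-linear map `Δ : A → A ⊗ A`
which is an `A`-bimodule map for the structure `a·(x ⊗ y)·b = (ax) ⊗ (yb)`. -/
def IsNearlyFrobenius (k : Type*) [Field k] (A : Type*) [Ring A] [Algebra k A]
    (Δ : A →ₗ[k] A ⊗[k] A) : Prop :=
  (∀ a x b : A, Δ (a * x * b) = (a ⊗ₜ[k] (1 : A)) * Δ x * ((1 : A) ⊗ₜ[k] b)) ∧
  (∀ x : A, (TensorProduct.assoc k A A A) (LinearMap.rTensor A Δ (Δ x)) =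
      LinearMap.lTensor A Δ (Δ x))

section Aux

variable (k : Type*) [Field k] (A : Type*) [Ring A] [Algebra k A]

/-- `δ m x = (x ⊗ 1) * m`. -/
noncomputable def nfDelta (m : A ⊗[k] A) : A →ₗ[k] A ⊗[k] A :=
  (LinearMap.mulRight k m).comp (Algebra.TensorProduct.includeLeft : A →ₐ[k] A ⊗[k] A).toLinearMap

@[simp] lemma nfDelta_apply (m : A ⊗[k] A) (x : A) :
    nfDelta k A m x = (x ⊗ₜ[k] (1 : A)) * m := rfl

noncomputable def ι12 : A ⊗[k] A →ₐ[k] A ⊗[k] (A ⊗[k] A) :=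
  Algebra.TensorProduct.map (AlgHom.id k A) Algebra.TensorProduct.includeLeft

noncomputable def ι13 : A ⊗[k] A →ₐ[k] A ⊗[k] (A ⊗[k] A) :=
  Algebra.TensorProduct.map (AlgHom.id k A) Algebra.TensorProduct.includeRight

noncomputable def ι23 : A ⊗[k] A →ₐ[k] A ⊗[k] (A ⊗[k] A) :=
  Algebra.TensorProduct.includeRight

@[simp] lemma ι12_tmul (a b : A) : ι12 k A (a ⊗ₜ[k] b) = a ⊗ₜ[k] (b ⊗ₜ[k] (1 : A)) := rfl
@[simp] lemma ι13_tmul (a b : A) : ι13 k A (a ⊗ₜ[k] b) = a ⊗ₜ[k] ((1 : A) ⊗ₜ[k] b) := rfl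
@[simp] lemma ι23_tmul (a b : A) : ι23 k A (a ⊗ₜ[k] b) = (1 : A) ⊗ₜ[k] (a ⊗ₜ[k] b) := rfl

variable {k A}

set_option synthInstance.maxHeartbeats 400000 in
lemma R1 (m t : A ⊗[k] A) :
    (TensorProduct.assoc k A A A) (LinearMap.rTensor A (nfDelta k A m) t)
      = ι13 k A t * ι12 k A m := by
  induction t with
  | zero => rw [map_zero, map_zero, map_zero, zero_mul]
  | tmul a b =>
      rw [LinearMap.rTensor_tmul, nfDelta_apply]
      induction m with
      | zero => simp
      | tmul c d =>
          simp [Algebra.TensorProduct.tmul_mul_tmul]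
      | add m₁ m₂ h₁ h₂ =>
          rw [mul_add, TensorProduct.add_tmul, map_add, map_add, mul_add, h₁, h₂]
  | add t₁ t₂ h₁ h₂ => simp [h₁, h₂, add_mul]

lemma R2 (m t : A ⊗[k] A) :
    LinearMap.lTensor A (nfDelta k A m) t = ι12 k A t * ι23 k A m := by
  induction t with
  | zero => simp
  | tmul a b =>
      rw [LinearMap.lTensor_tmul, nfDelta_apply]
      induction m with
      | zero => simp
      | tmul c d =>
          simp [Algebra.TensorProduct.tmul_mul_tmul]
      | add m₁ m₂ h₁ h₂ =>
          rw [mul_add, TensorProduct.tmul_add, map_add, mul_add, h₁, h₂]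
  | add t₁ t₂ h₁ h₂ => simp [h₁, h₂, add_mul]

/-- third-factor elements commute with `ι12 m`. -/
lemma comm3 (m : A ⊗[k] A) (b : A) :
    ((1 : A) ⊗ₜ[k] ((1 : A) ⊗ₜ[k] b)) * ι12 k A m
      = ι12 k A m * ((1 : A) ⊗ₜ[k] ((1 : A) ⊗ₜ[k] b)) := by
  induction m with
  | zero => simp
  | tmul c d => simp [Algebra.TensorProduct.tmul_mul_tmul]
  | add m₁ m₂ h₁ h₂ => rw [map_add, mul_add, add_mul, h₁, h₂]

/-- Key identity using invariance of `m`. -/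
lemma keyK (m : A ⊗[k] A)
    (hm : ∀ a : A, (a ⊗ₜ[k] (1 : A)) * m = m * ((1 : A) ⊗ₜ[k] a))
    (t : A ⊗[k] A) :
    ι13 k A t * ι12 k A m = ι12 k A m * ι23 k A t := by
  induction t with
  | zero => simp
  | tmul a b =>
      have h1 : (a : A) ⊗ₜ[k] ((1 : A) ⊗ₜ[k] b)
          = ((a : A) ⊗ₜ[k] ((1 : A) ⊗ₜ[k] (1 : A)))
            * ((1 : A) ⊗ₜ[k] ((1 : A) ⊗ₜ[k] b)) := by
        simp [Algebra.TensorProduct.tmul_mul_tmul]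
      have h2 : ((a : A) ⊗ₜ[k] ((1 : A) ⊗ₜ[k] (1 : A))) * ι12 k A m
          = ι12 k A m * ((1 : A) ⊗ₜ[k] ((a : A) ⊗ₜ[k] (1 : A))) := by
        have := congrArg (ι12 k A) (hm a)
        simpa [map_mul] using this
      rw [ι13_tmul, h1, mul_assoc, comm3, ← mul_assoc, h2, mul_assoc, ι23_tmul]
      congr 1
      simp [Algebra.TensorProduct.tmul_mul_tmul]
  | add t₁ t₂ h₁ h₂ => rw [map_add, map_add, add_mul, mul_add, h₁, h₂]

lemma nfDelta_isNearlyFrobenius (m : A ⊗[k] A)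
    (hm : ∀ a : A, (a ⊗ₜ[k] (1 : A)) * m = m * ((1 : A) ⊗ₜ[k] a)) :
    IsNearlyFrobenius k A (nfDelta k A m) := by
  constructor
  · intro a x b
    simp only [nfDelta_apply]
    have key : ((a * x * b) ⊗ₜ[k] (1 : A))
        = (a ⊗ₜ[k] (1 : A)) * (x ⊗ₜ[k] (1 : A)) * (b ⊗ₜ[k] (1 : A)) := by
      simp [Algebra.TensorProduct.tmul_mul_tmul]
    rw [key]
    simp only [mul_assoc]
    rw [hm b]
  · intro x
    rw [R1, R2, nfDelta_apply]
    have hx : ι13 k A ((x ⊗ₜ[k] (1 : A)) * m)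
        = (x ⊗ₜ[k] ((1 : A) ⊗ₜ[k] (1 : A))) * ι13 k A m := by
      rw [map_mul]; rfl
    have hx' : ι12 k A ((x ⊗ₜ[k] (1 : A)) * m)
        = (x ⊗ₜ[k] ((1 : A) ⊗ₜ[k] (1 : A))) * ι12 k A m := by
      rw [map_mul]; rfl
    rw [hx, hx', mul_assoc, mul_assoc, keyK m hm m]

end Aux

/-- The map `e(Δ) = Δ(1)` is a bijection between the set of nearly
Frobenius coproducts on `A` and the invariants `I(A ⊗ A) = {m | a·m = m·a ∀ a}`. -/
theorem evalOne_bijection (k : Type*) [Field k] (A : Type*) [Ring A] [Algebra k A] :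
    Function.Injective
      (fun Δ : {Δ : A →ₗ[k] A ⊗[k] A // IsNearlyFrobenius k A Δ} => Δ.1 1) ∧
    Set.range (fun Δ : {Δ : A →ₗ[k] A ⊗[k] A // IsNearlyFrobenius k A Δ} => Δ.1 1) =
      {m : A ⊗[k] A | ∀ a : A, (a ⊗ₜ[k] (1 : A)) * m = m * ((1 : A) ⊗ₜ[k] a)} := by
  constructor
  · rintro ⟨Δ₁, h₁, _⟩ ⟨Δ₂, h₂, _⟩ h
    simp only at h
    ext x
    have e₁ := h₁ x 1 1
    have e₂ := h₂ x 1 1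
    rw [mul_one, mul_one] at e₁ e₂
    rw [e₁, e₂, h]
  · ext m
    constructor
    · rintro ⟨⟨Δ, hΔ, _⟩, rfl⟩
      intro a
      have e₁ := hΔ a 1 1
      have e₂ := hΔ 1 1 a
      rw [mul_one, mul_one] at e₁
      rw [one_mul, one_mul] at e₂
      simp only
      calc (a ⊗ₜ[k] (1 : A)) * Δ 1
          = (a ⊗ₜ[k] (1 : A)) * Δ 1 * ((1:A) ⊗ₜ[k] (1:A)) := by
            rw [← Algebra.TensorProduct.one_def, mul_one]
        _ = Δ a := e₁.symm
        _ = ((1:A) ⊗ₜ[k] (1:A)) * Δ 1 * ((1:A) ⊗ₜ[k] a) := e₂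
        _ = Δ 1 * ((1:A) ⊗ₜ[k] a) := by
            rw [← Algebra.TensorProduct.one_def, one_mul]
    · intro hm
      refine ⟨⟨nfDelta k A m, nfDelta_isNearlyFrobenius m hm⟩, ?_⟩
      simp [← Algebra.TensorProduct.one_def]
end

section
/- Let (A, Δ₁) and (B, Δ₂) be nearly Frobenius algebras over k. Define Δ : A ⊗ B → (A ⊗ B) ⊗ (A ⊗ B) by Δ = (1 ⊗ τ ⊗ 1) ∘ (Δ₁ ⊗ Δ₂), where τ : A ⊗ B → B ⊗ A is the flip. Then (A ⊗ B, Δ) is a nearly Frobenius algebra, i.e., Δ is coassociative and an (A ⊗ B)-bimodule map. -/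
open TensorProduct

set_option maxHeartbeats 2000000
set_option synthInstance.maxHeartbeats 400000

/-- If `(A, Δ₁)` and `(B, Δ₂)` are nearly Frobenius algebras then
`Δ = (1 ⊗ τ ⊗ 1) ∘ (Δ₁ ⊗ Δ₂)` makes `A ⊗ B` (with componentwise product) into a
nearly Frobenius algebra: `Δ` is coassociative and an `(A ⊗ B)`-bimodule map. -/
theorem tensor_nearlyFrobenius (k : Type*) [Field k]
    (A : Type*) [Ring A] [Algebra k A] (B : Type*) [Ring B] [Algebra k B]
    (Δ₁ : A →ₗ[k] A ⊗[k] A)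
    (hbim₁ : ∀ a x b : A, Δ₁ (a * x * b) = (a ⊗ₜ[k] (1 : A)) * Δ₁ x * ((1 : A) ⊗ₜ[k] b))
    (hco₁ : ∀ x : A, (TensorProduct.assoc k A A A) (LinearMap.rTensor A Δ₁ (Δ₁ x)) =
      LinearMap.lTensor A Δ₁ (Δ₁ x))
    (Δ₂ : B →ₗ[k] B ⊗[k] B)
    (hbim₂ : ∀ a x b : B, Δ₂ (a * x * b) = (a ⊗ₜ[k] (1 : B)) * Δ₂ x * ((1 : B) ⊗ₜ[k] b))
    (hco₂ : ∀ x : B, (TensorProduct.assoc k B B B) (LinearMap.rTensor B Δ₂ (Δ₂ x)) =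
      LinearMap.lTensor B Δ₂ (Δ₂ x))
    (Δ : (A ⊗[k] B) →ₗ[k] (A ⊗[k] B) ⊗[k] (A ⊗[k] B))
    (hΔ : Δ = (TensorProduct.tensorTensorTensorComm k A A B B).toLinearMap ∘ₗ
      TensorProduct.map Δ₁ Δ₂) :
    (∀ a x b : A ⊗[k] B,
        Δ (a * x * b) = (a ⊗ₜ[k] (1 : A ⊗[k] B)) * Δ x * ((1 : A ⊗[k] B) ⊗ₜ[k] b)) ∧
    (∀ x : A ⊗[k] B,
        (TensorProduct.assoc k (A ⊗[k] B) (A ⊗[k] B) (A ⊗[k] B))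
            (LinearMap.rTensor (A ⊗[k] B) Δ (Δ x)) =
          LinearMap.lTensor (A ⊗[k] B) Δ (Δ x)) := by
  subst hΔ
  constructor
  · intro a x b
    induction a using TensorProduct.induction_on with
    | zero => simp
    | add a a' ha ha' => simp only [add_mul, map_add, ha, ha', add_tmul]
    | tmul a₁ a₂ =>
      induction b using TensorProduct.induction_on with
      | zero => simp
      | add b b' hb hb' => simp only [mul_add, map_add, hb, hb', tmul_add]
      | tmul b₁ b₂ =>
        induction x using TensorProduct.induction_on with
        | zero => simp
        | add x x' hx hx' => simp only [mul_add, add_mul, map_add, hx, hx']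
        | tmul x₁ x₂ =>
          simp only [Algebra.TensorProduct.tmul_mul_tmul, LinearMap.coe_comp,
            LinearEquiv.coe_coe, Function.comp_apply, TensorProduct.map_tmul]
          rw [hbim₁, hbim₂]
          generalize Δ₁ x₁ = p
          generalize Δ₂ x₂ = q
          induction p using TensorProduct.induction_on with
          | zero => simp
          | add p p' hp hp' =>
            simp only [mul_add, add_mul, map_add, add_tmul, tmul_add, hp, hp']
          | tmul y z =>
            induction q using TensorProduct.induction_on with
            | zero => simp
            | add q q' hq hq' =>
              simp only [mul_add, add_mul, map_add, add_tmul, tmul_add, hq, hq']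
            | tmul y' z' =>
              simp [Algebra.TensorProduct.tmul_mul_tmul, Algebra.TensorProduct.one_def,
                tensorTensorTensorComm_tmul]
  · -- coassociativity
    set T := A ⊗[k] B with hT
    set Δ := (TensorProduct.tensorTensorTensorComm k A A B B).toLinearMap ∘ₗ
      TensorProduct.map Δ₁ Δ₂ with hΔdef
    set Ψ : ((A ⊗[k] (A ⊗[k] A)) ⊗[k] (B ⊗[k] (B ⊗[k] B))) →ₗ[k] T ⊗[k] (T ⊗[k] T) :=
      (LinearMap.lTensor T (TensorProduct.tensorTensorTensorComm k A A B B).toLinearMap) ∘ₗ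
        (TensorProduct.tensorTensorTensorComm k A (A ⊗[k] A) B (B ⊗[k] B)).toLinearMap
      with hΨ
    have key1 : ∀ (p : A ⊗[k] A) (q : B ⊗[k] B),
        (TensorProduct.assoc k T T T) (LinearMap.rTensor T Δ
          ((TensorProduct.tensorTensorTensorComm k A A B B) (p ⊗ₜ[k] q))) =
        Ψ (((TensorProduct.assoc k A A A) (LinearMap.rTensor A Δ₁ p)) ⊗ₜ[k]
           ((TensorProduct.assoc k B B B) (LinearMap.rTensor B Δ₂ q))) := by
      intro p q
      induction p using TensorProduct.induction_on with
      | zero => simp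
      | add p p' hp hp' => simp only [map_add, add_tmul, hp, hp']
      | tmul y z =>
        induction q using TensorProduct.induction_on with
        | zero => simp
        | add q q' hq hq' => simp only [map_add, add_tmul, tmul_add, hq, hq']
        | tmul y' z' =>
          simp only [tensorTensorTensorComm_tmul, LinearMap.rTensor_tmul,
            LinearMap.coe_comp, LinearEquiv.coe_coe, Function.comp_apply,
            TensorProduct.map_tmul, hΔdef]
          generalize Δ₁ y = u
          generalize Δ₂ y' = v
          induction u using TensorProduct.induction_on with
          | zero => simp
          | add u u' hu hu' => simp only [map_add, add_tmul, tmul_add, hu, hu']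
          | tmul u₁ u₂ =>
            induction v using TensorProduct.induction_on with
            | zero => simp
            | add v v' hv hv' => simp only [map_add, add_tmul, tmul_add, hv, hv']
            | tmul v₁ v₂ =>
              simp [hΨ, tensorTensorTensorComm_tmul]
    have key2 : ∀ (p : A ⊗[k] A) (q : B ⊗[k] B),
        LinearMap.lTensor T Δ
          ((TensorProduct.tensorTensorTensorComm k A A B B) (p ⊗ₜ[k] q)) =
        Ψ ((LinearMap.lTensor A Δ₁ p) ⊗ₜ[k] (LinearMap.lTensor B Δ₂ q)) := by
      intro p q
      induction p using TensorProduct.induction_on with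
      | zero => simp
      | add p p' hp hp' => simp only [map_add, add_tmul, hp, hp']
      | tmul y z =>
        induction q using TensorProduct.induction_on with
        | zero => simp
        | add q q' hq hq' => simp only [map_add, add_tmul, tmul_add, hq, hq']
        | tmul y' z' =>
          simp only [tensorTensorTensorComm_tmul, LinearMap.lTensor_tmul,
            LinearMap.coe_comp, LinearEquiv.coe_coe, Function.comp_apply,
            TensorProduct.map_tmul, hΔdef]
          generalize Δ₁ z = u
          generalize Δ₂ z' = v
          induction u using TensorProduct.induction_on with
          | zero => simp
          | add u u' hu hu' => simp only [map_add, add_tmul, tmul_add, hu, hu']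
          | tmul u₁ u₂ =>
            induction v using TensorProduct.induction_on with
            | zero => simp
            | add v v' hv hv' => simp only [map_add, add_tmul, tmul_add, hv, hv']
            | tmul v₁ v₂ =>
              simp [hΨ, tensorTensorTensorComm_tmul]
    intro x
    induction x using TensorProduct.induction_on with
    | zero => simp
    | add x x' hx hx' => simp only [map_add, hx, hx']
    | tmul x₁ x₂ =>
      have hΔx : Δ (x₁ ⊗ₜ[k] x₂) =
          (TensorProduct.tensorTensorTensorComm k A A B B) (Δ₁ x₁ ⊗ₜ[k] Δ₂ x₂) := by
        simp [hΔdef]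
      rw [hΔx, key1, key2, hco₁, hco₂]
end

section
/- Let (A, Δ) be a nearly Frobenius algebra and J ⊆ A a nearly Frobenius ideal, i.e., a two-sided ideal with Δ(J) ⊆ J ⊗ A + A ⊗ J. Then there exists a unique linear map Δ̄ : A/J → (A/J) ⊗ (A/J) with (p ⊗ p) ∘ Δ = Δ̄ ∘ p, where p : A → A/J is the projection, and (A/J, Δ̄) is a nearly Frobenius algebra. -/
open TensorProduct

/-- If `(A, Δ)` is a nearly Frobenius algebra and `J ⊆ A` is a nearly
Frobenius ideal (a two-sided ideal with `Δ(J) ⊆ J ⊗ A + A ⊗ J`), then the quotient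
`A/J` (realized as any algebra `B` with a surjective algebra map `p : A → B` whose
kernel is `J`) carries a unique linear map `Δ̄` with `(p ⊗ p) ∘ Δ = Δ̄ ∘ p`, and any
such `Δ̄` makes `B` a nearly Frobenius algebra. -/
theorem quotient_nearlyFrobenius (k : Type*) [Field k]
    (A : Type*) [Ring A] [Algebra k A] (B : Type*) [Ring B] [Algebra k B]
    (Δ : A →ₗ[k] A ⊗[k] A)
    (hbim : ∀ a x b : A, Δ (a * x * b) = (a ⊗ₜ[k] (1 : A)) * Δ x * ((1 : A) ⊗ₜ[k] b))
    (hco : ∀ x : A, (TensorProduct.assoc k A A A) (LinearMap.rTensor A Δ (Δ x)) =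
      LinearMap.lTensor A Δ (Δ x))
    (J : Submodule k A)
    (hJl : ∀ a : A, ∀ x ∈ J, a * x ∈ J)
    (hJr : ∀ a : A, ∀ x ∈ J, x * a ∈ J)
    (hΔJ : ∀ x ∈ J, Δ x ∈
      LinearMap.range (TensorProduct.mapIncl J (⊤ : Submodule k A)) ⊔
        LinearMap.range (TensorProduct.mapIncl (⊤ : Submodule k A) J))
    (p : A →ₐ[k] B) (hp : Function.Surjective p)
    (hker : ∀ x : A, p x = 0 ↔ x ∈ J) :
    (∃! Δbar : B →ₗ[k] B ⊗[k] B,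
        (TensorProduct.map p.toLinearMap p.toLinearMap) ∘ₗ Δ = Δbar ∘ₗ p.toLinearMap) ∧
    (∀ Δbar : B →ₗ[k] B ⊗[k] B,
        (TensorProduct.map p.toLinearMap p.toLinearMap) ∘ₗ Δ = Δbar ∘ₗ p.toLinearMap →
        (∀ a x b : B,
            Δbar (a * x * b) = (a ⊗ₜ[k] (1 : B)) * Δbar x * ((1 : B) ⊗ₜ[k] b)) ∧
        (∀ x : B, (TensorProduct.assoc k B B B) (LinearMap.rTensor B Δbar (Δbar x)) =
            LinearMap.lTensor B Δbar (Δbar x))) := by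
  set q : A →ₗ[k] B := p.toLinearMap with hq
  have hq' : ∀ x : A, q x = p x := fun _ => rfl
  set P : A ⊗[k] A →ₗ[k] B ⊗[k] B := TensorProduct.map q q with hP
  -- key: P ∘ Δ kills J
  have key1 : ∀ w : J ⊗[k] (⊤ : Submodule k A),
      P (TensorProduct.mapIncl J (⊤ : Submodule k A) w) = 0 := by
    intro w
    induction w using TensorProduct.induction_on with
    | zero => simp
    | tmul a b =>
        have ha : q (a : A) = 0 := (hker _).mpr a.2
        show q (a : A) ⊗ₜ[k] q (b : A) = 0
        rw [ha, TensorProduct.zero_tmul]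
    | add u v hu hv => rw [map_add, map_add, hu, hv, add_zero]
  have key2 : ∀ w : (⊤ : Submodule k A) ⊗[k] J,
      P (TensorProduct.mapIncl (⊤ : Submodule k A) J w) = 0 := by
    intro w
    induction w using TensorProduct.induction_on with
    | zero => simp
    | tmul a b =>
        have hb : q (b : A) = 0 := (hker _).mpr b.2
        show q (a : A) ⊗ₜ[k] q (b : A) = 0
        rw [hb, TensorProduct.tmul_zero]
    | add u v hu hv => rw [map_add, map_add, hu, hv, add_zero]
  have hPΔ : ∀ x ∈ J, P (Δ x) = 0 := by
    intro x hx
    obtain ⟨u, hu, v, hv, huv⟩ := Submodule.mem_sup.mp (hΔJ x hx)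
    obtain ⟨w, rfl⟩ := hu
    obtain ⟨w', rfl⟩ := hv
    rw [← huv, map_add, key1, key2, add_zero]
  have hqsurj : Function.Surjective q := hp
  -- construct Δbar
  set f : A →ₗ[k] B ⊗[k] B := P ∘ₗ Δ with hf
  have hle : LinearMap.ker q ≤ LinearMap.ker f := by
    intro x hx
    exact hPΔ x ((hker x).mp hx)
  set e := LinearMap.quotKerEquivOfSurjective q hqsurj with he
  have he_mk : ∀ x : A, e (Submodule.Quotient.mk x) = q x := by
    intro x
    simp [he, LinearMap.quotKerEquivOfSurjective, LinearMap.quotKerEquivRange]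
  set Δbar₀ : B →ₗ[k] B ⊗[k] B :=
    ((LinearMap.ker q).liftQ f hle) ∘ₗ (e.symm : B →ₗ[k] A ⧸ LinearMap.ker q) with hΔbar₀
  have hfact : ∀ x : A, Δbar₀ (q x) = f x := by
    intro x
    have : e.symm (q x) = Submodule.Quotient.mk x := by
      rw [← he_mk x, LinearEquiv.symm_apply_apply]
    simp [hΔbar₀, this]
  have hcomm : (TensorProduct.map p.toLinearMap p.toLinearMap) ∘ₗ Δ = Δbar₀ ∘ₗ p.toLinearMap := by
    ext x
    exact (hfact x).symm
  refine ⟨⟨Δbar₀, hcomm, ?_⟩, ?_⟩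
  · intro g hg
    ext b
    obtain ⟨x, rfl⟩ := hp b
    have h1 : g (p x) = f x := by
      have := congrArg (fun F => F x) hg.symm; exact this
    rw [h1, ← hfact x]; rfl
  · intro Δbar hΔbar
    have hfact' : ∀ x : A, Δbar (p x) = P (Δ x) := by
      intro x
      exact (congrArg (fun F => F x) hΔbar).symm
    -- P is multiplicative
    have hPmul : ∀ u v : A ⊗[k] A, P (u * v) = P u * P v := by
      intro u v
      have : P = (Algebra.TensorProduct.map p p).toLinearMap := by
        ext a b : 2; rfl
      rw [this]
      exact map_mul (Algebra.TensorProduct.map p p) u v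
    constructor
    · intro a x b
      obtain ⟨a', rfl⟩ := hp a
      obtain ⟨x', rfl⟩ := hp x
      obtain ⟨b', rfl⟩ := hp b
      have h0 : (p a') * (p x') * (p b') = p (a' * x' * b') := by simp
      have hL : P (a' ⊗ₜ[k] (1 : A)) = (p a') ⊗ₜ[k] (1 : B) := by
        show q a' ⊗ₜ[k] q 1 = _
        have : q (1 : A) = 1 := map_one p
        rw [this]; rfl
      have hR : P ((1 : A) ⊗ₜ[k] b') = (1 : B) ⊗ₜ[k] (p b') := by
        show q 1 ⊗ₜ[k] q b' = _
        have : q (1 : A) = 1 := map_one p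
        rw [this]; rfl
      rw [h0, hfact', hbim, hPmul, hPmul, hfact', hL, hR]
    · intro x
      obtain ⟨x', rfl⟩ := hp x
      -- naturality of rTensor / lTensor with respect to P
      have hr : LinearMap.rTensor B Δbar ∘ₗ P =
          TensorProduct.map P q ∘ₗ LinearMap.rTensor A Δ := by
        refine TensorProduct.ext' fun a b => ?_
        show LinearMap.rTensor B Δbar (q a ⊗ₜ[k] q b) =
          TensorProduct.map P q (Δ a ⊗ₜ[k] b)
        simp only [LinearMap.rTensor_tmul, TensorProduct.map_tmul]
        rw [show Δbar (q a) = P (Δ a) from hfact' a]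
      have hl : LinearMap.lTensor B Δbar ∘ₗ P =
          TensorProduct.map q P ∘ₗ LinearMap.lTensor A Δ := by
        refine TensorProduct.ext' fun a b => ?_
        show LinearMap.lTensor B Δbar (q a ⊗ₜ[k] q b) =
          TensorProduct.map q P (a ⊗ₜ[k] Δ b)
        simp only [LinearMap.lTensor_tmul, TensorProduct.map_tmul]
        rw [show Δbar (q b) = P (Δ b) from hfact' b]
      calc (TensorProduct.assoc k B B B) (LinearMap.rTensor B Δbar (Δbar (p x')))
          = (TensorProduct.assoc k B B B)
              ((TensorProduct.map P q) (LinearMap.rTensor A Δ (Δ x'))) := by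
            rw [hfact' x']
            exact congrArg _ (congrArg (fun F => F (Δ x')) hr)
        _ = TensorProduct.map q P ((TensorProduct.assoc k A A A)
              (LinearMap.rTensor A Δ (Δ x'))) := by
            rw [hP, ← TensorProduct.map_map_assoc]
        _ = TensorProduct.map q P (LinearMap.lTensor A Δ (Δ x')) := by rw [hco]
        _ = LinearMap.lTensor B Δbar (Δbar (p x')) := by
            rw [hfact' x']
            exact (congrArg (fun F => F (Δ x')) hl).symm
end

section
/- Let A = k[x]/(x^{n+1}). Every nearly Frobenius coproduct Δ on A is a k-linear combination of the coproducts Δ_m, 0 ≤ m ≤ n, defined by Δ_m(x^l) = Σ_{i+j=n+m+l, 0 ≤ i,j ≤ n} x^i ⊗ x^j. In particular, the space of nearly Frobenius coproducts on A has dimension n+1. -/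
open TensorProduct

/-- The truncated polynomial algebra `k[x]/(x^(n+1))`. -/
abbrev TruncPoly (k : Type*) [Field k] (n : ℕ) : Type _ :=
  AdjoinRoot ((Polynomial.X : Polynomial k) ^ (n + 1))

/-!
A bimodule map `Δ : A → A ⊗ A` is determined by `T = Δ 1` through `Δ a = (a ⊗ 1) T`, and `T`
satisfies `(a ⊗ 1) T = T (1 ⊗ a)`; conversely every such `T` defines a bimodule map, and bimodule
maps are automatically coassociative: with `Δ 1 = Σ tᵢ ⊗ tᵢ'`, both `(Δ ⊗ id) Δ y` and
`(id ⊗ Δ) Δ y` equal `Σ y tᵢ ⊗ tᵢ' tⱼ ⊗ tⱼ'`.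

For `A = k[x]/(xⁿ⁺¹)` write `T = Σ tᵢ ⊗ xⁱ` in the basis `1 ⊗ xⁱ` of `A ⊗ A` over `A`. The
`i`-th coordinate of `T` is the `n`-th coordinate of `T (1 ⊗ xⁿ⁻ⁱ) = (xⁿ⁻ⁱ ⊗ 1) T`, so
`tᵢ = xⁿ⁻ⁱ tₙ` and `T = (tₙ ⊗ 1) Σ xⁿ⁻ⁱ ⊗ xⁱ`. Hence the nearly Frobenius coproducts are exactly
the maps `a ↦ (a b ⊗ 1) Σ xⁿ⁻ⁱ ⊗ xⁱ` with `b ∈ A`, which depend injectively and linearly on `b`;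
`b = xᵐ` gives `Δ_m`.
-/

section Bimodule

variable {R A : Type*} [CommSemiring R] [Semiring A] [Algebra R A]

theorem assoc_rTensor_eq_lTensor_of_map_mul_mul (Δ : A →ₗ[R] A ⊗[R] A)
    (hΔ : ∀ a x b : A, Δ (a * x * b) = (a ⊗ₜ 1) * Δ x * (1 ⊗ₜ b)) (y : A) :
    TensorProduct.assoc R A A A (LinearMap.rTensor A Δ (Δ y)) =
      LinearMap.lTensor A Δ (Δ y) := by
  obtain ⟨S, hS⟩ := TensorProduct.exists_finset (Δ 1)
  have hleft (a : A) : Δ a = (a ⊗ₜ 1) * Δ 1 := by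
    simpa [← Algebra.TensorProduct.one_def] using hΔ a 1 1
  have hright (a b : A) : Δ (a * b) = Δ a * (1 ⊗ₜ b) := by
    simpa [← Algebra.TensorProduct.one_def] using hΔ 1 a b
  have hexpand (a : A) : Δ a = ∑ p ∈ S, (a * p.1) ⊗ₜ p.2 := by
    simp [hleft a, hS, Finset.mul_sum, Algebra.TensorProduct.tmul_mul_tmul]
  rw [hexpand y]
  simp only [map_sum, LinearMap.rTensor_tmul, LinearMap.lTensor_tmul, hright, hexpand,
    Finset.sum_mul, Algebra.TensorProduct.tmul_mul_tmul, mul_one, sum_tmul, tmul_sum,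
    TensorProduct.assoc_tmul]
  exact Finset.sum_comm

def IsBimoduleCentral (T : A ⊗[R] A) : Prop :=
  ∀ a : A, (a ⊗ₜ 1) * T = T * (1 ⊗ₜ a)

theorem IsBimoduleCentral.of_adjoin_eq_top {T : A ⊗[R] A} {s : Set A}
    (hs : Algebra.adjoin R s = ⊤) (h : ∀ a ∈ s, (a ⊗ₜ 1) * T = T * (1 ⊗ₜ a)) :
    IsBimoduleCentral T := by
  intro a
  induction (hs ▸ Algebra.mem_top : a ∈ Algebra.adjoin R s) using Algebra.adjoin_induction with
  | mem a ha => exact h a ha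
  | algebraMap r =>
    rw [← Algebra.TensorProduct.algebraMap_apply, ← Algebra.TensorProduct.algebraMap_apply',
      Algebra.commutes]
  | add a b _ _ ha hb => rw [add_tmul, tmul_add, add_mul, mul_add, ha, hb]
  | mul a b _ _ ha hb =>
    calc (a * b) ⊗ₜ 1 * T = (a ⊗ₜ 1) * ((b ⊗ₜ 1) * T) := by
          rw [← mul_assoc, Algebra.TensorProduct.tmul_mul_tmul, one_mul]
      _ = T * (1 ⊗ₜ (a * b)) := by
          rw [hb, ← mul_assoc, ha, mul_assoc, Algebra.TensorProduct.tmul_mul_tmul, one_mul]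

theorem IsBimoduleCentral.tmul_one_mul {A : Type*} [CommSemiring A] [Algebra R A]
    {T : A ⊗[R] A} (hT : IsBimoduleCentral T) (b : A) : IsBimoduleCentral ((b ⊗ₜ 1) * T) := by
  intro a
  calc (a ⊗ₜ 1) * ((b ⊗ₜ 1) * T) = (b ⊗ₜ 1) * ((a ⊗ₜ 1) * T) := by
        rw [← mul_assoc, ← mul_assoc, Algebra.TensorProduct.tmul_mul_tmul,
          Algebra.TensorProduct.tmul_mul_tmul, mul_comm a b]
    _ = (b ⊗ₜ 1) * T * (1 ⊗ₜ a) := by rw [hT, mul_assoc]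

def leftMulCoproduct (T : A ⊗[R] A) : A →ₗ[R] A ⊗[R] A :=
  LinearMap.mulRight R T ∘ₗ Algebra.TensorProduct.includeLeft.toLinearMap

@[simp]
theorem leftMulCoproduct_apply (T : A ⊗[R] A) (a : A) : leftMulCoproduct T a = (a ⊗ₜ 1) * T :=
  rfl

theorem IsBimoduleCentral.leftMulCoproduct_mul_mul {T : A ⊗[R] A} (hT : IsBimoduleCentral T)
    (a x b : A) :
    leftMulCoproduct T (a * x * b) = (a ⊗ₜ 1) * leftMulCoproduct T x * (1 ⊗ₜ b) := by
  simp only [leftMulCoproduct_apply, mul_assoc, ← hT b]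
  simp only [← mul_assoc, Algebra.TensorProduct.tmul_mul_tmul, mul_one]

theorem smul_eq_tmul_one_mul {A : Type*} [CommSemiring A] [Algebra R A] (a : A) (z : A ⊗[R] A) :
    a • z = (a ⊗ₜ 1) * z :=
  Algebra.smul_def a z

end Bimodule

section NearlyFrobenius

variable {k A : Type*} [Field k] [Ring A] [Algebra k A] {Δ : A →ₗ[k] A ⊗[k] A}

theorem IsBimoduleCentral.isNearlyFrobenius_leftMulCoproduct {T : A ⊗[k] A}
    (hT : IsBimoduleCentral T) : IsNearlyFrobenius k A (leftMulCoproduct T) :=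
  ⟨hT.leftMulCoproduct_mul_mul,
    assoc_rTensor_eq_lTensor_of_map_mul_mul _ hT.leftMulCoproduct_mul_mul⟩

theorem IsNearlyFrobenius.eq_leftMulCoproduct (hΔ : IsNearlyFrobenius k A Δ) :
    Δ = leftMulCoproduct (Δ 1) := by
  ext a
  simpa [← Algebra.TensorProduct.one_def] using hΔ.1 a 1 1

theorem IsNearlyFrobenius.isBimoduleCentral_map_one (hΔ : IsNearlyFrobenius k A Δ) :
    IsBimoduleCentral (Δ 1) := by
  intro a
  have h₁ := hΔ.1 a 1 1
  have h₂ := hΔ.1 1 1 a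
  simp only [mul_one, one_mul, ← Algebra.TensorProduct.one_def] at h₁ h₂
  rw [← h₁, h₂]

end NearlyFrobenius

namespace TruncPoly

open Polynomial

variable {k : Type*} [Field k] {n : ℕ}

noncomputable section

abbrev root (k : Type*) [Field k] (n : ℕ) : TruncPoly k n :=
  AdjoinRoot.root ((X : k[X]) ^ (n + 1))

theorem root_pow_eq_zero {i : ℕ} (hi : n < i) : root k n ^ i = 0 := by
  refine pow_eq_zero_of_le hi ?_
  rw [root, ← AdjoinRoot.mk_X, ← map_pow, AdjoinRoot.mk_self]

def basis (k : Type*) [Field k] (n : ℕ) : Module.Basis (Fin (n + 1)) k (TruncPoly k n) :=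
  (AdjoinRoot.powerBasis' (monic_X_pow (R := k) (n + 1))).basis.reindex
    (finCongr (natDegree_X_pow _))

@[simp]
theorem basis_apply (i : Fin (n + 1)) : basis k n i = root k n ^ (i : ℕ) := by
  simp only [basis, Module.Basis.coe_reindex, PowerBasis.coe_basis, AdjoinRoot.powerBasis'_gen,
    Function.comp_apply]
  rfl

theorem basis_repr_root_pow (e : ℕ) (i : Fin (n + 1)) :
    (basis k n).repr (root k n ^ e) i = if e = i then 1 else 0 := by
  rcases le_or_gt e n with he | he
  · rw [show root k n ^ e = basis k n ⟨e, Nat.lt_succ_of_le he⟩ by simp,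
      Module.Basis.repr_self, Finsupp.single_apply]
    simp only [Fin.ext_iff]
  · rw [root_pow_eq_zero he, map_zero, Finsupp.zero_apply, if_neg (by omega)]

theorem finrank_eq : Module.finrank k (TruncPoly k n) = n + 1 := by
  rw [Module.finrank_eq_card_basis (basis k n), Fintype.card_fin]

/-- The Casimir element of the Frobenius form `a ↦ (coefficient of xⁿ in a)`. -/
def casimir (k : Type*) [Field k] (n : ℕ) : TruncPoly k n ⊗[k] TruncPoly k n :=
  ∑ i ∈ Finset.range (n + 1), (root k n ^ (n - i)) ⊗ₜ (root k n ^ i)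

theorem root_tmul_one_mul_casimir :
    (root k n ⊗ₜ 1) * casimir k n = casimir k n * (1 ⊗ₜ root k n) := by
  -- both sides are `Σ_{i ≤ n+1} xⁿ⁺¹⁻ⁱ ⊗ xⁱ` with one end term, which vanishes, left out
  let f (i : ℕ) := (root k n ^ (n + 1 - i)) ⊗ₜ[k] (root k n ^ i)
  have hleft : (root k n ⊗ₜ 1) * casimir k n = ∑ i ∈ Finset.range (n + 1), f i := by
    refine (Finset.mul_sum ..).trans (Finset.sum_congr rfl fun i hi => ?_)
    rw [Algebra.TensorProduct.tmul_mul_tmul, one_mul, ← pow_succ']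
    simp only [f]
    congr 2
    have := Finset.mem_range_succ_iff.mp hi
    omega
  have hright : casimir k n * (1 ⊗ₜ root k n) = ∑ i ∈ Finset.range (n + 1), f (i + 1) := by
    refine (Finset.sum_mul ..).trans (Finset.sum_congr rfl fun i _ => ?_)
    rw [Algebra.TensorProduct.tmul_mul_tmul, mul_one, ← pow_succ]
    simp only [f, Nat.add_sub_add_right]
  have hf₀ : f 0 = 0 := by simp [f, root_pow_eq_zero (Nat.lt_succ_self n)]
  have hfn : f (n + 1) = 0 := by simp [f, root_pow_eq_zero (Nat.lt_succ_self n)]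
  rw [hleft, hright, ← add_zero (∑ i ∈ _, f i), ← hfn, ← Finset.sum_range_succ,
    Finset.sum_range_succ', hf₀, add_zero]

theorem isBimoduleCentral_casimir : IsBimoduleCentral (casimir k n) :=
  .of_adjoin_eq_top AdjoinRoot.adjoinRoot_eq_top (by simpa using root_tmul_one_mul_casimir)

/-- `A ⊗ A` as a free `A`-module on `1 ⊗ xⁱ`, with `A` acting on the first factor. -/
def tensorBasis (k : Type*) [Field k] (n : ℕ) :
    Module.Basis (Fin (n + 1)) (TruncPoly k n) (TruncPoly k n ⊗[k] TruncPoly k n) :=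
  Algebra.TensorProduct.basis (TruncPoly k n) (basis k n)

theorem tensorBasis_coord_eq (i : Fin (n + 1)) (z : TruncPoly k n ⊗[k] TruncPoly k n) :
    (tensorBasis k n).coord i z =
      (tensorBasis k n).coord (Fin.last n) (z * (1 ⊗ₜ (root k n ^ (n - i)))) := by
  suffices (tensorBasis k n).coord i = (tensorBasis k n).coord (Fin.last n) ∘ₗ
      LinearMap.mulRight (TruncPoly k n) (1 ⊗ₜ (root k n ^ (n - i))) from
    LinearMap.congr_fun this z
  refine (tensorBasis k n).ext fun j => ?_
  simp only [tensorBasis, Algebra.TensorProduct.basis_apply, basis_apply, Module.Basis.coord_apply,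
    Algebra.TensorProduct.basis_repr_tmul, one_smul, Finsupp.mapRange_apply, LinearMap.coe_comp,
    Function.comp_apply, LinearMap.mulRight_apply, Algebra.TensorProduct.tmul_mul_tmul, mul_one,
    ← pow_add]
  rw [basis_repr_root_pow, basis_repr_root_pow, Fin.val_last]
  have := i.is_lt
  split_ifs <;> first | rfl | omega

theorem casimir_eq_sum_smul_tensorBasis :
    casimir k n = ∑ i : Fin (n + 1), root k n ^ (n - (i : ℕ)) • tensorBasis k n i := by
  simp only [casimir, tensorBasis, Algebra.TensorProduct.basis_repr_symm_apply', basis_apply]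
  exact (Fin.sum_univ_eq_sum_range (fun i => (root k n ^ (n - i)) ⊗ₜ[k] (root k n ^ i)) _).symm

theorem eq_tmul_one_mul_casimir_of_isBimoduleCentral {T : TruncPoly k n ⊗[k] TruncPoly k n}
    (hT : IsBimoduleCentral T) :
    T = ((tensorBasis k n).coord (Fin.last n) T ⊗ₜ 1) * casimir k n := by
  set b := (tensorBasis k n).coord (Fin.last n) T
  have hcoord (i : Fin (n + 1)) : (tensorBasis k n).coord i T = root k n ^ (n - i) * b := by
    rw [tensorBasis_coord_eq, ← hT, ← smul_eq_tmul_one_mul, map_smul, smul_eq_mul]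
  calc T = ∑ i, (tensorBasis k n).coord i T • tensorBasis k n i :=
        ((tensorBasis k n).sum_repr T).symm
    _ = b • ∑ i : Fin (n + 1), root k n ^ (n - (i : ℕ)) • tensorBasis k n i := by
      simp only [hcoord, Finset.smul_sum, smul_smul, mul_comm]
    _ = (b ⊗ₜ 1) * casimir k n := by
      rw [← casimir_eq_sum_smul_tensorBasis, smul_eq_tmul_one_mul]

theorem tensorBasis_coord_last_tmul_one_mul_casimir (b : TruncPoly k n) :
    (tensorBasis k n).coord (Fin.last n) ((b ⊗ₜ 1) * casimir k n) = b := by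
  rw [← smul_eq_tmul_one_mul, map_smul, casimir_eq_sum_smul_tensorBasis,
    Module.Basis.coord_apply, Module.Basis.repr_sum_self]
  simp

/-- The paper's `Δ_m` is `coproduct k n (x ^ m)`. -/
def coproduct (k : Type*) [Field k] (n : ℕ) :
    TruncPoly k n →ₗ[k] TruncPoly k n →ₗ[k] TruncPoly k n ⊗[k] TruncPoly k n :=
  (LinearMap.mul k (TruncPoly k n)).flip.compr₂ (leftMulCoproduct (casimir k n))

theorem coproduct_apply (b a : TruncPoly k n) :
    coproduct k n b a = ((a * b) ⊗ₜ 1) * casimir k n :=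
  rfl

theorem coproduct_eq_leftMulCoproduct (b : TruncPoly k n) :
    coproduct k n b = leftMulCoproduct ((b ⊗ₜ 1) * casimir k n) := by
  ext a
  rw [coproduct_apply, leftMulCoproduct_apply, ← mul_assoc, Algebra.TensorProduct.tmul_mul_tmul,
    mul_one]

theorem coproduct_injective : Function.Injective (coproduct k n) := by
  refine (injective_iff_map_eq_zero _).mpr fun b hb => ?_
  have h := congrArg ((tensorBasis k n).coord (Fin.last n)) (LinearMap.congr_fun hb 1)
  rwa [coproduct_apply, one_mul, tensorBasis_coord_last_tmul_one_mul_casimir,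
    LinearMap.zero_apply, map_zero] at h

theorem isNearlyFrobenius_iff_mem_range_coproduct
    (Δ : TruncPoly k n →ₗ[k] TruncPoly k n ⊗[k] TruncPoly k n) :
    IsNearlyFrobenius k (TruncPoly k n) Δ ↔ Δ ∈ LinearMap.range (coproduct k n) := by
  constructor
  · intro hΔ
    refine ⟨(tensorBasis k n).coord (Fin.last n) (Δ 1), ?_⟩
    rw [coproduct_eq_leftMulCoproduct,
      ← eq_tmul_one_mul_casimir_of_isBimoduleCentral hΔ.isBimoduleCentral_map_one,
      ← hΔ.eq_leftMulCoproduct]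
  · rintro ⟨b, rfl⟩
    rw [coproduct_eq_leftMulCoproduct]
    exact (isBimoduleCentral_casimir.tmul_one_mul b).isNearlyFrobenius_leftMulCoproduct

theorem sum_range_ite_add_eq_tmul {N j : ℕ} (hj : j ≤ N) :
    ∑ i ∈ Finset.range (n + 1),
        (if i + j = N then (root k n ^ i) ⊗ₜ[k] (root k n ^ j) else 0) =
      (root k n ^ (N - j)) ⊗ₜ (root k n ^ j) := by
  rw [Finset.sum_congr rfl fun i _ => if_congr (show i + j = N ↔ N - j = i by omega) rfl rfl,
    Finset.sum_ite_eq]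
  split_ifs with h
  · rfl
  · rw [root_pow_eq_zero (by simp at h; omega), zero_tmul]

theorem root_pow_tmul_one_mul_casimir (s : ℕ) :
    ((root k n ^ s) ⊗ₜ 1) * casimir k n =
      ∑ i ∈ Finset.range (n + 1), ∑ j ∈ Finset.range (n + 1),
        if i + j = n + s then (root k n ^ i) ⊗ₜ[k] (root k n ^ j) else 0 := by
  rw [Finset.sum_comm, casimir, Finset.mul_sum]
  refine Finset.sum_congr rfl fun j hj => ?_
  rw [sum_range_ite_add_eq_tmul (by simp at hj; omega), Algebra.TensorProduct.tmul_mul_tmul,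
    one_mul, ← pow_add]
  congr 2
  simp at hj
  omega

theorem coproduct_apply_root_pow (b : TruncPoly k n) (l : ℕ) :
    coproduct k n b (root k n ^ l) =
      ∑ m : Fin (n + 1), (basis k n).repr b m •
        ∑ i ∈ Finset.range (n + 1), ∑ j ∈ Finset.range (n + 1),
          if i + j = n + (m : ℕ) + l then (root k n ^ i) ⊗ₜ[k] (root k n ^ j) else 0 := by
  conv_lhs => rw [← (basis k n).sum_repr b]
  simp only [map_sum, map_smul, LinearMap.sum_apply, LinearMap.smul_apply,
    coproduct_apply, basis_apply, ← pow_add, root_pow_tmul_one_mul_casimir, add_assoc, add_comm l]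

end

end TruncPoly

open TruncPoly in
/-- Every nearly Frobenius coproduct on `A = k[x]/(x^(n+1))` is a linear
combination of the coproducts `Δ_m(x^l) = Σ_{i+j=n+m+l, 0 ≤ i,j ≤ n} x^i ⊗ x^j`
(`0 ≤ m ≤ n`); in particular the space of nearly Frobenius coproducts has
dimension `n+1`. -/
theorem truncPoly_nearlyFrobenius_classification (k : Type*) [Field k] (n : ℕ) :
    (∀ Δ : TruncPoly k n →ₗ[k] TruncPoly k n ⊗[k] TruncPoly k n,
      IsNearlyFrobenius k (TruncPoly k n) Δ →
      ∃ c : Fin (n + 1) → k, ∀ l ≤ n,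
        Δ ((AdjoinRoot.root ((Polynomial.X : Polynomial k) ^ (n + 1))) ^ l) =
          ∑ m : Fin (n + 1), c m •
            ∑ i ∈ Finset.range (n + 1), ∑ j ∈ Finset.range (n + 1),
              if i + j = n + (m : ℕ) + l then
                ((AdjoinRoot.root ((Polynomial.X : Polynomial k) ^ (n + 1))) ^ i) ⊗ₜ[k]
                  ((AdjoinRoot.root ((Polynomial.X : Polynomial k) ^ (n + 1))) ^ j)
              else 0) ∧
    (∃ S : Submodule k (TruncPoly k n →ₗ[k] TruncPoly k n ⊗[k] TruncPoly k n),
      (S : Set (TruncPoly k n →ₗ[k] TruncPoly k n ⊗[k] TruncPoly k n)) =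
        {Δ | IsNearlyFrobenius k (TruncPoly k n) Δ} ∧
      Module.finrank k S = n + 1) := by
  refine ⟨fun Δ hΔ => ?_, LinearMap.range (coproduct k n), ?_, ?_⟩
  · obtain ⟨b, rfl⟩ := (isNearlyFrobenius_iff_mem_range_coproduct Δ).mp hΔ
    exact ⟨(basis k n).repr b, fun l _ => coproduct_apply_root_pow b l⟩
  · ext Δ
    exact (isNearlyFrobenius_iff_mem_range_coproduct Δ).symm
  · rw [LinearMap.finrank_range_of_inj coproduct_injective, finrank_eq]
end

section
/- Let A = k[x]/(x^{n+1}) and let Δ_m (for 1 ≤ m ≤ n) be the nearly Frobenius coproduct Δ_m(x^l) = Σ_{i+j=n+m+l} x^i ⊗ x^j. Then there is no linear map θ : A → k such that (θ ⊗ id) ∘ Δ_m = id_A; i.e., Δ_m does not admit a counit, so it does not come from a Frobenius algebra structure. -/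
open TensorProduct

/-- For `1 ≤ m ≤ n`, the nearly Frobenius coproduct
`Δ_m(x^l) = Σ_{i+j=n+m+l} x^i ⊗ x^j` on `A = k[x]/(x^(n+1))` admits no counit:
there is no linear `θ : A → k` with `(θ ⊗ id) ∘ Δ_m = id`. -/
theorem truncPoly_deltaM_no_counit (k : Type*) [Field k] (n m : ℕ)
    (hm1 : 1 ≤ m) (hm2 : m ≤ n)
    (Δ : TruncPoly k n →ₗ[k] TruncPoly k n ⊗[k] TruncPoly k n)
    (hΔ : ∀ l ≤ n,
      Δ ((AdjoinRoot.root ((Polynomial.X : Polynomial k) ^ (n + 1))) ^ l) =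
        ∑ i ∈ Finset.range (n + 1), ∑ j ∈ Finset.range (n + 1),
          if i + j = n + m + l then
            ((AdjoinRoot.root ((Polynomial.X : Polynomial k) ^ (n + 1))) ^ i) ⊗ₜ[k]
              ((AdjoinRoot.root ((Polynomial.X : Polynomial k) ^ (n + 1))) ^ j)
          else 0) :
    ¬ ∃ θ : TruncPoly k n →ₗ[k] k, ∀ y : TruncPoly k n,
        (TensorProduct.lid k (TruncPoly k n)) (LinearMap.rTensor (TruncPoly k n) θ (Δ y)) = y := by
  rintro ⟨θ, hθ⟩
  set r := AdjoinRoot.root ((Polynomial.X : Polynomial k) ^ (n + 1)) with hr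
  have hmonic : ((Polynomial.X : Polynomial k) ^ (n + 1)).Monic := Polynomial.monic_X_pow _
  set pb := AdjoinRoot.powerBasis' hmonic with hpb
  have hdim : pb.dim = n + 1 := by
    simp [hpb, AdjoinRoot.powerBasis'_dim]
  have hgen : pb.gen = r := by simp [hpb, hr, AdjoinRoot.powerBasis'_gen]
  set e0 : Fin pb.dim := ⟨0, by omega⟩ with he0
  have h0 := hθ (r ^ 0)
  rw [hΔ 0 (Nat.zero_le n)] at h0
  simp only [map_sum, apply_ite, map_zero, LinearMap.rTensor_tmul, TensorProduct.lid_tmul] at h0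
  have key : ∀ j ≤ n, pb.basis.repr (r ^ j) e0 = if j = 0 then 1 else 0 := by
    intro j hj
    have : r ^ j = pb.basis ⟨j, by omega⟩ := by
      rw [pb.coe_basis, hgen]
    rw [this, pb.basis.repr_self, Finsupp.single_apply]
    have heq : ((⟨j, by omega⟩ : Fin pb.dim) = e0) ↔ j = 0 := by
      simp [he0, Fin.ext_iff]
    simp only [heq]
  have hcontra := congrArg (fun z => pb.basis.repr z e0) h0
  simp only [map_sum, map_smul, apply_ite (pb.basis.repr), map_zero,
    Finsupp.coe_finset_sum, Finset.sum_apply, Finsupp.smul_apply, Finsupp.coe_zero,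
    Pi.zero_apply, apply_ite (fun f : Fin pb.dim →₀ k => f e0)] at hcontra
  rw [key 0 (Nat.zero_le n)] at hcontra
  simp only [if_pos rfl] at hcontra
  have hzero : ∀ i ∈ Finset.range (n + 1), ∀ j ∈ Finset.range (n + 1),
      (if i + j = n + m + 0 then θ (r ^ i) • pb.basis.repr (r ^ j) e0 else 0) = 0 := by
    intro i hi j hj
    simp only [Finset.mem_range] at hi hj
    by_cases hij : i + j = n + m + 0
    · rw [if_pos hij, key j (by omega)]
      have : j ≠ 0 := by omega
      rw [if_neg this]
      simp
    · rw [if_neg hij]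
  rw [Finset.sum_congr rfl (fun i hi => Finset.sum_congr rfl (hzero i hi)),
    Finset.sum_const_zero] at hcontra
  simp at hcontra
end

section
/- Let A = M_n(k) over a commutative field k. Every nearly Frobenius coproduct Δ on A is of the form Δ(E_{ij}) = Σ_{r,s} a_{rs} E_{ir} ⊗ E_{sj} for scalars a_{rs} ∈ k. In particular, the vector space of nearly Frobenius coproducts on M_n(k) has dimension n². -/
open TensorProduct

/-!
Write `E i j` for the matrix units and fix an index `z`. Since `E i j = E i z * E z z * E z j`,
a bimodule map satisfies `Δ (E i j) = (E i z ⊗ 1) * Δ (E z z) * (1 ⊗ E z j)`, and this sandwich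
only sees the coordinates `a r s` of `Δ (E z z)` along the basis tensors `E z r ⊗ E s z`.
Conversely `Δ_rs x = ∑ p, x E p r ⊗ E s p` is a bimodule map because
`∑ p, b E p r ⊗ E s p = ∑ p, E p r ⊗ E s p b` (both sides are `∑ p q, b q p • E q r ⊗ E s p`);
it sends `E i j` to `E i r ⊗ E s j`, hence is coassociative, and the `Δ_rs` are linearly
independent because their values at `E z z` are distinct basis tensors.
-/

namespace Matrix

section Single

variable {R : Type*} [CommSemiring R] {l m n : Type*} [Fintype m]

theorem stdBasis_repr_apply [Finite n] (x : Matrix m n R) (ij : m × n) :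
    (stdBasis R m n).repr x ij = x ij.1 ij.2 := by
  simp [stdBasis]

variable [DecidableEq l] [DecidableEq m] [DecidableEq n]

theorem single_one_mul_eq_sum [Fintype n] (i : l) (z : m) (x : Matrix m n R) :
    single i z (1 : R) * x = ∑ r, x z r • single i r (1 : R) := by
  ext a b
  simp [Matrix.sum_apply, single_apply, mul_apply, ite_and]

theorem mul_single_one_eq_sum [Fintype l] (x : Matrix l m R) (z : m) (j : n) :
    x * single z j (1 : R) = ∑ s, x s z • single s j (1 : R) := by
  ext a b
  simp [Matrix.sum_apply, single_apply, mul_apply, ite_and]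

end Single

variable {R : Type*} [CommSemiring R] {m : Type*} [Fintype m] [DecidableEq m]

theorem sum_mul_single_tmul_single (b : Matrix m m R) (r s : m) :
    ∑ p, (b * single p r 1) ⊗ₜ[R] single s p (1 : R) =
      ∑ p, single p r (1 : R) ⊗ₜ[R] (single s p 1 * b) := by
  simp only [mul_single_one_eq_sum, single_one_mul_eq_sum, sum_tmul, tmul_sum, smul_tmul',
    tmul_smul]
  exact Finset.sum_comm

theorem single_tmul_one_mul_mul_one_tmul_single (t : Matrix m m R ⊗[R] Matrix m m R)
    (i z j : m) :
    (single i z 1 ⊗ₜ[R] 1) * t * (1 ⊗ₜ[R] single z j 1) =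
      ∑ r, ∑ s, ((stdBasis R m m).tensorProduct (stdBasis R m m)).repr t ((z, r), (s, z)) •
        (single i r (1 : R) ⊗ₜ[R] single s j (1 : R)) := by
  induction t using TensorProduct.induction_on with
  | zero => simp
  | tmul x y =>
    rw [Algebra.TensorProduct.tmul_mul_tmul, Algebra.TensorProduct.tmul_mul_tmul, one_mul,
      mul_one]
    simp only [single_one_mul_eq_sum, mul_single_one_eq_sum, sum_tmul, tmul_sum, smul_tmul_smul,
      Module.Basis.tensorProduct_repr_tmul_apply, stdBasis_repr_apply, smul_eq_mul, mul_comm]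
    exact Finset.sum_comm
  | add t u ht hu =>
    simp only [mul_add, add_mul, ht, hu, map_add, Finsupp.add_apply, add_smul,
      Finset.sum_add_distrib]

theorem linearIndependent_single_tmul_single (i j : m) :
    LinearIndependent R fun rs : m × m =>
      single i rs.1 (1 : R) ⊗ₜ[R] single rs.2 j (1 : R) := by
  have hinj : Function.Injective fun rs : m × m => ((i, rs.1), (rs.2, j)) :=
    fun a b h => by simpa [Prod.ext_iff] using h
  simpa [Function.comp_def, stdBasis_eq_single] using
    ((stdBasis R m m).tensorProduct (stdBasis R m m)).linearIndependent.comp _ hinj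

variable (R) in
noncomputable def singleCoproduct (r s : m) :
    Matrix m m R →ₗ[R] Matrix m m R ⊗[R] Matrix m m R where
  toFun x := ∑ p, (x * single p r 1) ⊗ₜ single s p 1
  map_add' x y := by simp only [add_mul, add_tmul, Finset.sum_add_distrib]
  map_smul' c x := by simp only [smul_mul_assoc, smul_tmul', Finset.smul_sum, RingHom.id_apply]

theorem singleCoproduct_apply (r s : m) (x : Matrix m m R) :
    singleCoproduct R r s x = ∑ p, (x * single p r 1) ⊗ₜ single s p 1 := rfl

@[simp]
theorem singleCoproduct_single (r s i j : m) :
    singleCoproduct R r s (single i j 1) = single i r 1 ⊗ₜ single s j 1 := by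
  rw [singleCoproduct_apply, Finset.sum_eq_single j]
  · simp
  · intro p _ hp
    rw [single_mul_single_of_ne _ _ _ _ hp.symm, zero_tmul]
  · simp

theorem singleCoproduct_mul_mul (r s : m) (a x b : Matrix m m R) :
    singleCoproduct R r s (a * x * b) =
      (a ⊗ₜ[R] (1 : Matrix m m R)) * singleCoproduct R r s x *
        ((1 : Matrix m m R) ⊗ₜ[R] b) :=
  calc
  _ = ((a * x) ⊗ₜ[R] (1 : Matrix m m R)) *
        ∑ p, (b * single p r 1) ⊗ₜ[R] single s p (1 : R) := by
    simp [singleCoproduct_apply, Finset.mul_sum, mul_assoc]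
  _ = _ := by
    rw [sum_mul_single_tmul_single, singleCoproduct_apply, Finset.mul_sum, Finset.mul_sum,
      Finset.sum_mul]
    simp only [Algebra.TensorProduct.tmul_mul_tmul, one_mul, mul_one, mul_assoc]

theorem singleCoproduct_coassoc (r s : m) :
    (TensorProduct.assoc R _ _ _).toLinearMap ∘ₗ
        (singleCoproduct R r s).rTensor (Matrix m m R) ∘ₗ singleCoproduct R r s =
      (singleCoproduct R r s).lTensor (Matrix m m R) ∘ₗ singleCoproduct R r s :=
  ext_linearMap R fun i j => LinearMap.ext_ring <| by simp

theorem linearIndependent_singleCoproduct :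
    LinearIndependent R fun rs : m × m => singleCoproduct R rs.1 rs.2 := by
  rcases isEmpty_or_nonempty m with hm | ⟨⟨z⟩⟩
  · exact linearIndependent_empty_type
  · refine .of_comp (LinearMap.applyₗ (single z z (1 : R))) ?_
    simpa [Function.comp_def] using linearIndependent_single_tmul_single (R := R) z z

theorem exists_eq_sum_smul_singleCoproduct
    (Δ : Matrix m m R →ₗ[R] Matrix m m R ⊗[R] Matrix m m R)
    (hΔ : ∀ a x b, Δ (a * x * b) =
      (a ⊗ₜ[R] (1 : Matrix m m R)) * Δ x * ((1 : Matrix m m R) ⊗ₜ[R] b)) :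
    ∃ a : m × m → R, Δ = ∑ rs, a rs • singleCoproduct R rs.1 rs.2 := by
  rcases isEmpty_or_nonempty m with hm | ⟨⟨z⟩⟩
  · exact ⟨0, ext_linearMap R fun i => isEmptyElim i⟩
  refine ⟨fun rs => ((stdBasis R m m).tensorProduct (stdBasis R m m)).repr
    (Δ (single z z 1)) ((z, rs.1), (rs.2, z)), ext_linearMap R fun i j => LinearMap.ext_ring ?_⟩
  have hij : single i j (1 : R) = single i z 1 * single z z 1 * single z j 1 := by simp
  simp only [LinearMap.comp_apply, singleLinearMap_apply, hij, hΔ,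
    single_tmul_one_mul_mul_one_tmul_single]
  simp [LinearMap.sum_apply, Fintype.sum_prod_type]

theorem isNearlyFrobenius_singleCoproduct {k : Type*} [Field k] (r s : m) :
    IsNearlyFrobenius k (Matrix m m k) (singleCoproduct k r s) :=
  ⟨singleCoproduct_mul_mul r s, LinearMap.congr_fun (singleCoproduct_coassoc r s)⟩

end Matrix

/-- Every nearly Frobenius coproduct on `M_n(k)` has the form
`Δ(E i j) = Σ_{r,s} a_{rs} E i r ⊗ E s j`; in particular the space of nearly
Frobenius coproducts on `M_n(k)` has dimension `n²` (expressed by exhibiting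
`n²` linearly independent nearly Frobenius coproducts spanning all of them). -/
theorem matrix_nearlyFrobenius_classification (k : Type*) [Field k] (n : ℕ) :
    (∀ Δ : Matrix (Fin n) (Fin n) k →ₗ[k]
        Matrix (Fin n) (Fin n) k ⊗[k] Matrix (Fin n) (Fin n) k,
      IsNearlyFrobenius k (Matrix (Fin n) (Fin n) k) Δ →
      ∃ a : Fin n → Fin n → k, ∀ i j : Fin n,
        Δ (Matrix.single i j (1 : k)) =
          ∑ r : Fin n, ∑ s : Fin n, a r s •
            ((Matrix.single i r (1 : k)) ⊗ₜ[k]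
              (Matrix.single s j (1 : k)))) ∧
    (∃ D : Fin n × Fin n →
        (Matrix (Fin n) (Fin n) k →ₗ[k]
          Matrix (Fin n) (Fin n) k ⊗[k] Matrix (Fin n) (Fin n) k),
      (∀ rs : Fin n × Fin n, IsNearlyFrobenius k (Matrix (Fin n) (Fin n) k) (D rs)) ∧
      LinearIndependent k D ∧
      (∀ Δ, IsNearlyFrobenius k (Matrix (Fin n) (Fin n) k) Δ →
        ∃ a : Fin n × Fin n → k, Δ = ∑ rs : Fin n × Fin n, a rs • D rs)) := by
  refine ⟨fun Δ hΔ => ?_, fun rs => Matrix.singleCoproduct k rs.1 rs.2,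
    fun rs => Matrix.isNearlyFrobenius_singleCoproduct rs.1 rs.2,
    Matrix.linearIndependent_singleCoproduct,
    fun Δ hΔ => Matrix.exists_eq_sum_smul_singleCoproduct Δ hΔ.1⟩
  obtain ⟨a, rfl⟩ := Matrix.exists_eq_sum_smul_singleCoproduct Δ hΔ.1
  exact ⟨fun r s => a (r, s), fun i j => by simp [LinearMap.sum_apply, Fintype.sum_prod_type]⟩
end

section
/- Let G = Z/nZ be a finite cyclic group with generator g and A = k[G] its group algebra. For each m with 1 ≤ m ≤ n, the linear map Δ_m determined by Δ_m(1) = Σ_{k=1}^{n} g^k ⊗ g^{m-k} (exponents mod n) extends via Δ_m(x) = (x ⊗ 1)Δ_m(1) to a coassociative A-bimodule map, hence a nearly Frobenius coproduct on k[G]. -/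
/-! Write `c = g^m`, so that `Δ_m(1) = ∑_{g h = c} g ⊗ h`. As `c` is central, the reindexing
`g ↦ b g` gives `(b ⊗ 1) Δ_m(1) = Δ_m(1) (1 ⊗ b)`, which is exactly what makes
`x ↦ (x ⊗ 1) Δ_m(1)` a bimodule map. Coassociativity is a reindexing too: `(Δ ⊗ 1) Δ(1)` and
`(1 ⊗ Δ) Δ(1)` are both the sum of `u ⊗ v ⊗ w` over all `u v w = c²`. -/

open TensorProduct

section ExtendByLeftMultiplication

variable {k A : Type*} [CommSemiring k] [Semiring A] [Algebra k A]

noncomputable def tmulOneMul (D : A ⊗[k] A) : A →ₗ[k] A ⊗[k] A :=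
  LinearMap.mulRight k D ∘ₗ (TensorProduct.mk k A A).flip 1

theorem tmulOneMul_apply (D : A ⊗[k] A) (x : A) : tmulOneMul D x = (x ⊗ₜ 1) * D := rfl

theorem tmulOneMul_one (D : A ⊗[k] A) : tmulOneMul D 1 = D := by
  rw [tmulOneMul_apply, ← Algebra.TensorProduct.one_def, one_mul]

theorem tmulOneMul_mul_mul {D : A ⊗[k] A} (hD : ∀ b : A, (b ⊗ₜ 1) * D = D * (1 ⊗ₜ b))
    (a x b : A) : tmulOneMul D (a * x * b) = (a ⊗ₜ 1) * tmulOneMul D x * (1 ⊗ₜ b) := by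
  have hmul : (a * x * b) ⊗ₜ[k] (1 : A) = (a ⊗ₜ 1) * (x ⊗ₜ 1) * (b ⊗ₜ 1) := by
    simp only [Algebra.TensorProduct.tmul_mul_tmul, mul_one]
  rw [tmulOneMul_apply, tmulOneMul_apply, hmul, mul_assoc _ (b ⊗ₜ 1), hD, ← mul_assoc,
    mul_assoc (a ⊗ₜ 1)]

end ExtendByLeftMultiplication

namespace MonoidAlgebra

variable (k : Type*) {G : Type*} [CommSemiring k] [Group G] [Fintype G]

noncomputable def mulAntidiagonalTensor (c : G) : MonoidAlgebra k G ⊗[k] MonoidAlgebra k G :=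
  ∑ g : G, of k G g ⊗ₜ of k G (g⁻¹ * c)

variable {k}

theorem tmul_one_mul_mulAntidiagonalTensor {c : G} (hc : c ∈ Subgroup.center G)
    (b : MonoidAlgebra k G) :
    (b ⊗ₜ 1) * mulAntidiagonalTensor k c = mulAntidiagonalTensor k c * (1 ⊗ₜ b) := by
  induction b using MonoidAlgebra.induction_on with
  | of h =>
    rw [mulAntidiagonalTensor, Finset.mul_sum, Finset.sum_mul]
    refine Fintype.sum_equiv (Equiv.mulLeft h) _ _ fun g => ?_
    simp only [Equiv.coe_mulLeft, Algebra.TensorProduct.tmul_mul_tmul, one_mul, mul_one,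
      ← map_mul, mul_inv_rev, mul_assoc]
    rw [← Subgroup.mem_center_iff.mp hc h, inv_mul_cancel_left]
  | add f g hf hg => rw [add_tmul, tmul_add, add_mul, mul_add, hf, hg]
  | smul r f hf => rw [← smul_tmul', tmul_smul, smul_mul_assoc, mul_smul_comm, hf]

theorem tmulOneMul_mulAntidiagonalTensor_apply (c : G) (x : MonoidAlgebra k G) :
    tmulOneMul (mulAntidiagonalTensor k c) x = ∑ g : G, (x * of k G g) ⊗ₜ of k G (g⁻¹ * c) := by
  simp only [tmulOneMul_apply, mulAntidiagonalTensor, Finset.mul_sum,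
    Algebra.TensorProduct.tmul_mul_tmul, one_mul]

theorem tmulOneMul_mulAntidiagonalTensor_coassoc {c : G} (hc : c ∈ Subgroup.center G)
    (x : MonoidAlgebra k G) :
    TensorProduct.assoc k _ _ _ ((tmulOneMul (mulAntidiagonalTensor k c)).rTensor _
        (tmulOneMul (mulAntidiagonalTensor k c) x)) =
      (tmulOneMul (mulAntidiagonalTensor k c)).lTensor _
        (tmulOneMul (mulAntidiagonalTensor k c) x) := by
  simp only [tmulOneMul_mulAntidiagonalTensor_apply, map_sum, LinearMap.rTensor_tmul,
    LinearMap.lTensor_tmul, sum_tmul, tmul_sum, assoc_tmul]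
  rw [← Fintype.sum_prod_type', ← Fintype.sum_prod_type']
  refine Fintype.sum_equiv ⟨fun p => (p.1 * p.2, p.1), fun p => (p.2, p.2⁻¹ * p.1),
    fun p => by simp, fun p => by simp⟩ _ _ fun p => ?_
  simp only [Equiv.coe_fn_mk, mul_assoc, ← map_mul, mul_inv_rev]
  rw [← Subgroup.mem_center_iff.mp hc p.1, inv_mul_cancel_left]

end MonoidAlgebra

theorem ZMod.sum_range_natCast_succ {M : Type*} [AddCommMonoid M] (n : ℕ) [NeZero n]
    (f : ZMod n → M) : ∑ j ∈ Finset.range n, f ((j + 1 : ℕ) : ZMod n) = ∑ z, f z := by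
  have hshift : ∑ j ∈ Finset.range n, f ((j + 1 : ℕ) : ZMod n) =
      ∑ j ∈ Finset.range n, f (j : ZMod n) := by
    obtain ⟨n', rfl⟩ := Nat.exists_eq_succ_of_ne_zero (NeZero.ne n)
    rw [Finset.sum_range_succ, Finset.sum_range_succ', ZMod.natCast_self, Nat.cast_zero]
  rw [hshift]
  refine Finset.sum_nbij' (fun j => (j : ZMod n)) ZMod.val (by simp) (by simp [ZMod.val_lt])
    (fun j hj => ZMod.val_cast_of_lt (Finset.mem_range.mp hj))
    (fun z _ => ZMod.natCast_zmod_val z) (fun _ _ => rfl)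

theorem cyclicGroupAlgebra_deltaM_nearlyFrobenius_general (k : Type*) [Field k] (n m : ℕ)
    (hn : 0 < n) :
    ∃ Δ : MonoidAlgebra k (Multiplicative (ZMod n)) →ₗ[k]
        MonoidAlgebra k (Multiplicative (ZMod n)) ⊗[k]
          MonoidAlgebra k (Multiplicative (ZMod n)),
      Δ 1 = ∑ j ∈ Finset.range n,
          (MonoidAlgebra.of k (Multiplicative (ZMod n))
              (Multiplicative.ofAdd ((j + 1 : ℕ) : ZMod n))) ⊗ₜ[k]
            (MonoidAlgebra.of k (Multiplicative (ZMod n))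
              (Multiplicative.ofAdd (((m : ℕ) : ZMod n) - ((j + 1 : ℕ) : ZMod n)))) ∧
      (∀ x, Δ x = (x ⊗ₜ[k] (1 : MonoidAlgebra k (Multiplicative (ZMod n)))) * Δ 1) ∧
      (∀ a x b : MonoidAlgebra k (Multiplicative (ZMod n)),
        Δ (a * x * b) =
          (a ⊗ₜ[k] (1 : MonoidAlgebra k (Multiplicative (ZMod n)))) * Δ x *
            ((1 : MonoidAlgebra k (Multiplicative (ZMod n))) ⊗ₜ[k] b)) ∧
      (∀ x, (TensorProduct.assoc k (MonoidAlgebra k (Multiplicative (ZMod n)))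
            (MonoidAlgebra k (Multiplicative (ZMod n)))
            (MonoidAlgebra k (Multiplicative (ZMod n))))
            (LinearMap.rTensor (MonoidAlgebra k (Multiplicative (ZMod n))) Δ (Δ x)) =
          LinearMap.lTensor (MonoidAlgebra k (Multiplicative (ZMod n))) Δ (Δ x)) := by
  have : NeZero n := ⟨hn.ne'⟩
  set c := Multiplicative.ofAdd (m : ZMod n)
  have hc : c ∈ Subgroup.center (Multiplicative (ZMod n)) :=
    Subgroup.mem_center_iff.mpr fun g => mul_comm g c
  refine ⟨tmulOneMul (MonoidAlgebra.mulAntidiagonalTensor k c), ?_,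
    fun x => by rw [tmulOneMul_one, tmulOneMul_apply],
    tmulOneMul_mul_mul (MonoidAlgebra.tmul_one_mul_mulAntidiagonalTensor hc),
    MonoidAlgebra.tmulOneMul_mulAntidiagonalTensor_coassoc hc⟩
  rw [tmulOneMul_one, ZMod.sum_range_natCast_succ n fun z =>
    MonoidAlgebra.of k _ (Multiplicative.ofAdd z) ⊗ₜ
      MonoidAlgebra.of k _ (Multiplicative.ofAdd ((m : ZMod n) - z))]
  refine Fintype.sum_equiv Multiplicative.toAdd _ _ fun g => ?_
  rw [sub_eq_neg_add]
  rfl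

/-- For the group algebra `A = k[Z/n]` of a finite cyclic group with
generator `g` and `1 ≤ m ≤ n`, the element `Σ_{j=1}^{n} g^j ⊗ g^{m-j}` (exponents
mod `n`) extends, via `Δ_m(x) = (x ⊗ 1)·Δ_m(1)`, to a coassociative `A`-bimodule
map, i.e. a nearly Frobenius coproduct on `k[Z/n]`. -/
theorem cyclicGroupAlgebra_deltaM_nearlyFrobenius (k : Type*) [Field k] (n m : ℕ)
    (hn : 0 < n) (hm1 : 1 ≤ m) (hm2 : m ≤ n) :
    ∃ Δ : MonoidAlgebra k (Multiplicative (ZMod n)) →ₗ[k]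
        MonoidAlgebra k (Multiplicative (ZMod n)) ⊗[k]
          MonoidAlgebra k (Multiplicative (ZMod n)),
      Δ 1 = ∑ j ∈ Finset.range n,
          (MonoidAlgebra.of k (Multiplicative (ZMod n))
              (Multiplicative.ofAdd ((j + 1 : ℕ) : ZMod n))) ⊗ₜ[k]
            (MonoidAlgebra.of k (Multiplicative (ZMod n))
              (Multiplicative.ofAdd (((m : ℕ) : ZMod n) - ((j + 1 : ℕ) : ZMod n)))) ∧
      (∀ x, Δ x = (x ⊗ₜ[k] (1 : MonoidAlgebra k (Multiplicative (ZMod n)))) * Δ 1) ∧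
      (∀ a x b : MonoidAlgebra k (Multiplicative (ZMod n)),
        Δ (a * x * b) =
          (a ⊗ₜ[k] (1 : MonoidAlgebra k (Multiplicative (ZMod n)))) * Δ x *
            ((1 : MonoidAlgebra k (Multiplicative (ZMod n))) ⊗ₜ[k] b)) ∧
      (∀ x, (TensorProduct.assoc k (MonoidAlgebra k (Multiplicative (ZMod n)))
            (MonoidAlgebra k (Multiplicative (ZMod n)))
            (MonoidAlgebra k (Multiplicative (ZMod n))))
            (LinearMap.rTensor (MonoidAlgebra k (Multiplicative (ZMod n))) Δ (Δ x)) =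
          LinearMap.lTensor (MonoidAlgebra k (Multiplicative (ZMod n))) Δ (Δ x)) :=
  cyclicGroupAlgebra_deltaM_nearlyFrobenius_general k n m hn
end

section
/- Let A₁ and A₂ be k-algebras with nearly Frobenius coproducts Δ₁ and Δ₂ respectively, and let A = A₁ × A₂ be the product algebra. The element ξ = (ι₁ ⊗ ι₁)(Δ₁(1_{A₁})) + (ι₂ ⊗ ι₂)(Δ₂(1_{A₂})) ∈ A ⊗ A, where ι₁, ι₂ are the natural inclusions a ↦ (a,0) and b ↦ (0,b), satisfies (c ⊗ 1)·ξ = ξ·(1 ⊗ c) for all c ∈ A; hence A admits a nearly Frobenius coproduct Δ with Δ(1) = ξ. -/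
set_option maxHeartbeats 1000000
set_option synthInstance.maxHeartbeats 100000


open TensorProduct

/-- If `Δ₁`, `Δ₂` are nearly Frobenius coproducts on `A₁`, `A₂`, then on
the product algebra `A = A₁ × A₂` the element
`ξ = (ι₁ ⊗ ι₁)(Δ₁ 1) + (ι₂ ⊗ ι₂)(Δ₂ 1)` satisfies `(c ⊗ 1)·ξ = ξ·(1 ⊗ c)` for all
`c ∈ A`; hence `A` admits a nearly Frobenius coproduct `Δ` with `Δ(1) = ξ`. -/
theorem prod_nearlyFrobenius (k : Type*) [Field k]
    (A₁ : Type*) [Ring A₁] [Algebra k A₁] (A₂ : Type*) [Ring A₂] [Algebra k A₂]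
    (Δ₁ : A₁ →ₗ[k] A₁ ⊗[k] A₁)
    (hbim₁ : ∀ a x b : A₁, Δ₁ (a * x * b) = (a ⊗ₜ[k] (1 : A₁)) * Δ₁ x * ((1 : A₁) ⊗ₜ[k] b))
    (hco₁ : ∀ x : A₁, (TensorProduct.assoc k A₁ A₁ A₁) (LinearMap.rTensor A₁ Δ₁ (Δ₁ x)) =
      LinearMap.lTensor A₁ Δ₁ (Δ₁ x))
    (Δ₂ : A₂ →ₗ[k] A₂ ⊗[k] A₂)
    (hbim₂ : ∀ a x b : A₂, Δ₂ (a * x * b) = (a ⊗ₜ[k] (1 : A₂)) * Δ₂ x * ((1 : A₂) ⊗ₜ[k] b))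
    (hco₂ : ∀ x : A₂, (TensorProduct.assoc k A₂ A₂ A₂) (LinearMap.rTensor A₂ Δ₂ (Δ₂ x)) =
      LinearMap.lTensor A₂ Δ₂ (Δ₂ x))
    (ξ : (A₁ × A₂) ⊗[k] (A₁ × A₂))
    (hξ : ξ = TensorProduct.map (LinearMap.inl k A₁ A₂) (LinearMap.inl k A₁ A₂) (Δ₁ 1) +
        TensorProduct.map (LinearMap.inr k A₁ A₂) (LinearMap.inr k A₁ A₂) (Δ₂ 1)) :
    (∀ c : A₁ × A₂,
        (c ⊗ₜ[k] (1 : A₁ × A₂)) * ξ = ξ * ((1 : A₁ × A₂) ⊗ₜ[k] c)) ∧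
    (∃ Δ : (A₁ × A₂) →ₗ[k] (A₁ × A₂) ⊗[k] (A₁ × A₂),
      Δ 1 = ξ ∧
      (∀ a x b : A₁ × A₂,
        Δ (a * x * b) = (a ⊗ₜ[k] (1 : A₁ × A₂)) * Δ x * ((1 : A₁ × A₂) ⊗ₜ[k] b)) ∧
      (∀ x : A₁ × A₂,
        (TensorProduct.assoc k (A₁ × A₂) (A₁ × A₂) (A₁ × A₂))
            (LinearMap.rTensor (A₁ × A₂) Δ (Δ x)) =
          LinearMap.lTensor (A₁ × A₂) Δ (Δ x))) := by
  set ι₁ := LinearMap.inl k A₁ A₂ with hι₁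
  set ι₂ := LinearMap.inr k A₁ A₂ with hι₂
  set F₁ := TensorProduct.map ι₁ ι₁ with hF₁
  set F₂ := TensorProduct.map ι₂ ι₂ with hF₂
  -- left/right multiplication compatibility
  have hl₁ : ∀ (a : A₁ × A₂) (t : A₁ ⊗[k] A₁),
      (a ⊗ₜ[k] (1 : A₁ × A₂)) * F₁ t = F₁ ((a.1 ⊗ₜ[k] (1 : A₁)) * t) := by
    intro a t
    induction t using TensorProduct.induction_on with
    | zero => simp
    | tmul u v =>
        simp [hF₁, hι₁, Algebra.TensorProduct.tmul_mul_tmul, Prod.mul_def]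
    | add x y hx hy => simp [mul_add, map_add, hx, hy]
  have hr₁ : ∀ (b : A₁ × A₂) (t : A₁ ⊗[k] A₁),
      F₁ t * ((1 : A₁ × A₂) ⊗ₜ[k] b) = F₁ (t * ((1 : A₁) ⊗ₜ[k] b.1)) := by
    intro b t
    induction t using TensorProduct.induction_on with
    | zero => simp
    | tmul u v =>
        simp [hF₁, hι₁, Algebra.TensorProduct.tmul_mul_tmul, Prod.mul_def]
    | add x y hx hy => simp [add_mul, map_add, hx, hy]
  have hl₂ : ∀ (a : A₁ × A₂) (t : A₂ ⊗[k] A₂),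
      (a ⊗ₜ[k] (1 : A₁ × A₂)) * F₂ t = F₂ ((a.2 ⊗ₜ[k] (1 : A₂)) * t) := by
    intro a t
    induction t using TensorProduct.induction_on with
    | zero => simp
    | tmul u v =>
        simp [hF₂, hι₂, Algebra.TensorProduct.tmul_mul_tmul, Prod.mul_def]
    | add x y hx hy => simp [mul_add, map_add, hx, hy]
  have hr₂ : ∀ (b : A₁ × A₂) (t : A₂ ⊗[k] A₂),
      F₂ t * ((1 : A₁ × A₂) ⊗ₜ[k] b) = F₂ (t * ((1 : A₂) ⊗ₜ[k] b.2)) := by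
    intro b t
    induction t using TensorProduct.induction_on with
    | zero => simp
    | tmul u v =>
        simp [hF₂, hι₂, Algebra.TensorProduct.tmul_mul_tmul, Prod.mul_def]
    | add x y hx hy => simp [add_mul, map_add, hx, hy]
  -- one-sided bimodule identities
  have hL₁ : ∀ c x : A₁, Δ₁ (c * x) = (c ⊗ₜ[k] (1 : A₁)) * Δ₁ x := by
    intro c x
    simpa [← Algebra.TensorProduct.one_def] using hbim₁ c x 1
  have hR₁ : ∀ x c : A₁, Δ₁ (x * c) = Δ₁ x * ((1 : A₁) ⊗ₜ[k] c) := by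
    intro x c
    simpa [← Algebra.TensorProduct.one_def] using hbim₁ 1 x c
  have hL₂ : ∀ c x : A₂, Δ₂ (c * x) = (c ⊗ₜ[k] (1 : A₂)) * Δ₂ x := by
    intro c x
    simpa [← Algebra.TensorProduct.one_def] using hbim₂ c x 1
  have hR₂ : ∀ x c : A₂, Δ₂ (x * c) = Δ₂ x * ((1 : A₂) ⊗ₜ[k] c) := by
    intro x c
    simpa [← Algebra.TensorProduct.one_def] using hbim₂ 1 x c
  -- the coproduct
  set Δ : (A₁ × A₂) →ₗ[k] (A₁ × A₂) ⊗[k] (A₁ × A₂) :=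
    F₁ ∘ₗ Δ₁ ∘ₗ LinearMap.fst k A₁ A₂ + F₂ ∘ₗ Δ₂ ∘ₗ LinearMap.snd k A₁ A₂ with hΔ
  have hΔapp : ∀ x : A₁ × A₂, Δ x = F₁ (Δ₁ x.1) + F₂ (Δ₂ x.2) := by
    intro x; simp [hΔ]
  have hΔ1 : Δ 1 = ξ := by
    rw [hΔapp, hξ, Prod.fst_one, Prod.snd_one]
  constructor
  · intro c
    rw [hξ, mul_add, add_mul, hl₁, hl₂, hr₁, hr₂, ← hL₁, ← hL₂, ← hR₁, ← hR₂,
      mul_one, mul_one, one_mul, one_mul]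
  · refine ⟨Δ, hΔ1, ?_, ?_⟩
    · intro a x b
      rw [hΔapp, hΔapp, mul_add, add_mul, hl₁, hl₂, hr₁, hr₂]
      have h1 : (a * x * b).1 = a.1 * x.1 * b.1 := rfl
      have h2 : (a * x * b).2 = a.2 * x.2 * b.2 := rfl
      rw [h1, h2, hbim₁, hbim₂]
    · intro x
      -- compatibility of Δ with inclusions
      have hΔι₁ : ∀ u : A₁, Δ (ι₁ u) = F₁ (Δ₁ u) := by
        intro u; rw [hΔapp]; simp [hι₁]
      have hΔι₂ : ∀ u : A₂, Δ (ι₂ u) = F₂ (Δ₂ u) := by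
        intro u; rw [hΔapp]; simp [hι₂]
      have hrT₁ : ∀ t : A₁ ⊗[k] A₁,
          LinearMap.rTensor (A₁ × A₂) Δ (F₁ t) =
            TensorProduct.map F₁ ι₁ (LinearMap.rTensor A₁ Δ₁ t) := by
        intro t
        induction t using TensorProduct.induction_on with
        | zero => rw [map_zero, map_zero, map_zero, map_zero]
        | tmul u v =>
            rw [hF₁, TensorProduct.map_tmul, LinearMap.rTensor_tmul,
              LinearMap.rTensor_tmul, TensorProduct.map_tmul, hΔι₁]
        | add x y hx hy => rw [map_add, map_add, map_add, map_add, hx, hy]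
      have hrT₂ : ∀ t : A₂ ⊗[k] A₂,
          LinearMap.rTensor (A₁ × A₂) Δ (F₂ t) =
            TensorProduct.map F₂ ι₂ (LinearMap.rTensor A₂ Δ₂ t) := by
        intro t
        induction t using TensorProduct.induction_on with
        | zero => rw [map_zero, map_zero, map_zero, map_zero]
        | tmul u v =>
            rw [hF₂, TensorProduct.map_tmul, LinearMap.rTensor_tmul,
              LinearMap.rTensor_tmul, TensorProduct.map_tmul, hΔι₂]
        | add x y hx hy => rw [map_add, map_add, map_add, map_add, hx, hy]
      have hlT₁ : ∀ t : A₁ ⊗[k] A₁,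
          LinearMap.lTensor (A₁ × A₂) Δ (F₁ t) =
            TensorProduct.map ι₁ F₁ (LinearMap.lTensor A₁ Δ₁ t) := by
        intro t
        induction t using TensorProduct.induction_on with
        | zero => rw [map_zero, map_zero, map_zero, map_zero]
        | tmul u v =>
            rw [hF₁, TensorProduct.map_tmul, LinearMap.lTensor_tmul,
              LinearMap.lTensor_tmul, TensorProduct.map_tmul, hΔι₁]
        | add x y hx hy => rw [map_add, map_add, map_add, map_add, hx, hy]
      have hlT₂ : ∀ t : A₂ ⊗[k] A₂,
          LinearMap.lTensor (A₁ × A₂) Δ (F₂ t) =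
            TensorProduct.map ι₂ F₂ (LinearMap.lTensor A₂ Δ₂ t) := by
        intro t
        induction t using TensorProduct.induction_on with
        | zero => rw [map_zero, map_zero, map_zero, map_zero]
        | tmul u v =>
            rw [hF₂, TensorProduct.map_tmul, LinearMap.lTensor_tmul,
              LinearMap.lTensor_tmul, TensorProduct.map_tmul, hΔι₂]
        | add x y hx hy => rw [map_add, map_add, map_add, map_add, hx, hy]
      rw [hΔapp, map_add, hrT₁, hrT₂, map_add, map_add, hlT₁, hlT₂]
      congr 1
      · rw [hF₁, ← TensorProduct.map_map_assoc, hco₁]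
      · rw [hF₂, ← TensorProduct.map_map_assoc, hco₂]
end

section
/- Let A be the path algebra over k of the linear A_n quiver 1 → 2 → ⋯ → n with arrows α_i : i → (i+1). Fix a ∈ k and define Δ on the basis of paths by Δ(e_i) = a·(α_i⋯α_{n-1}) ⊗ (α_1⋯α_{i-1}) (with the conventions Δ(e_1) = a·(α_1⋯α_{n-1}) ⊗ e_1 and Δ(e_n) = a·e_n ⊗ (α_1⋯α_{n-1})), and Δ(α_i⋯α_j) = a·(α_i⋯α_{n-1}) ⊗ (α_1⋯α_j). Then Δ is a coassociative A-bimodule map, i.e., a nearly Frobenius coproduct on A. -/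
/-!
Both the bimodule identity and coassociativity are multilinear in their arguments, so it
suffices to check them on basis paths `e_{ij}`. There `Δ (e_{ij} e_{jl}) = a • e_{in} ⊗ e_{0l}`
is recovered from `Δ e_{jl}` by `e_{ij} e_{jn} = e_{in}` and from `Δ e_{ij}` by
`e_{0j} e_{jl} = e_{0l}`, while both iterated coproducts of `e_{ij}` equal
`a² • e_{in} ⊗ e_{0n} ⊗ e_{0j}`.
-/

open TensorProduct

section Coproduct

variable {k A ι : Type*} [CommSemiring k] [Semiring A] [Algebra k A]
  {b : Module.Basis ι k A} {Δ : A →ₗ[k] A ⊗[k] A}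

theorem map_mul_eq_tmul_one_mul_of_basis
    (h : ∀ p q, Δ (b p * b q) = (b p ⊗ₜ[k] (1 : A)) * Δ (b q)) (c x : A) :
    Δ (c * x) = (c ⊗ₜ[k] (1 : A)) * Δ x :=
  LinearMap.congr_fun₂ (LinearMap.ext_basis (B := (LinearMap.mul k A).compr₂ Δ)
    (B' := (LinearMap.mul k (A ⊗[k] A)).compl₁₂ ((TensorProduct.mk k A A).flip 1) Δ) b b h) c x

theorem map_mul_eq_mul_one_tmul_of_basis
    (h : ∀ p q, Δ (b p * b q) = Δ (b p) * ((1 : A) ⊗ₜ[k] b q)) (x d : A) :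
    Δ (x * d) = Δ x * ((1 : A) ⊗ₜ[k] d) :=
  LinearMap.congr_fun₂ (LinearMap.ext_basis (B := (LinearMap.mul k A).compr₂ Δ)
    (B' := (LinearMap.mul k (A ⊗[k] A)).compl₁₂ Δ (TensorProduct.mk k A A 1)) b b h) x d

theorem coassoc_of_basis
    (h : ∀ p, TensorProduct.assoc k A A A (Δ.rTensor A (Δ (b p))) = Δ.lTensor A (Δ (b p)))
    (x : A) :
    TensorProduct.assoc k A A A (Δ.rTensor A (Δ x)) = Δ.lTensor A (Δ x) :=
  LinearMap.congr_fun (b.ext (f₁ := (TensorProduct.assoc k A A A).toLinearMap ∘ₗ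
    Δ.rTensor A ∘ₗ Δ) (f₂ := Δ.lTensor A ∘ₗ Δ) h) x

end Coproduct

namespace LinearQuiver

variable {k A : Type*} [CommSemiring k] [Semiring A] [Algebra k A] {n : ℕ}
  (b : Module.Basis {p : Fin (n + 1) × Fin (n + 1) // p.1 ≤ p.2} k A)

noncomputable def coproduct (a : k) : A →ₗ[k] A ⊗[k] A :=
  b.constr k fun p =>
    a • (b ⟨(p.1.1, Fin.last n), Fin.le_last _⟩ ⊗ₜ[k] b ⟨(0, p.1.2), Fin.zero_le _⟩)

theorem coproduct_basis (a : k) (i j : Fin (n + 1)) (h : i ≤ j) :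
    coproduct b a (b ⟨(i, j), h⟩) =
      a • (b ⟨(i, Fin.last n), Fin.le_last i⟩ ⊗ₜ[k] b ⟨(0, j), Fin.zero_le j⟩) :=
  b.constr_basis k _ _

def MulConcat : Prop :=
  ∀ (i j i' j' : Fin (n + 1)) (h : i ≤ j) (h' : i' ≤ j'),
    b ⟨(i, j), h⟩ * b ⟨(i', j'), h'⟩ =
      if hj : j = i' then b ⟨(i, j'), h.trans (hj.trans_le h')⟩ else 0

variable {b}

theorem coproduct_mul_left (hb : MulConcat b) (a : k) (p q) :
    coproduct b a (b p * b q) = (b p ⊗ₜ[k] (1 : A)) * coproduct b a (b q) := by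
  unfold MulConcat at hb
  obtain ⟨⟨i, j⟩, h⟩ := p
  obtain ⟨⟨i', j'⟩, h'⟩ := q
  by_cases hj : j = i'
  · subst hj
    simp [hb, coproduct_basis, smul_tmul', Algebra.TensorProduct.tmul_mul_tmul]
  · simp [hb, hj, coproduct_basis, Algebra.TensorProduct.tmul_mul_tmul]

theorem coproduct_mul_right (hb : MulConcat b) (a : k) (p q) :
    coproduct b a (b p * b q) = coproduct b a (b p) * ((1 : A) ⊗ₜ[k] b q) := by
  unfold MulConcat at hb
  obtain ⟨⟨i, j⟩, h⟩ := p
  obtain ⟨⟨i', j'⟩, h'⟩ := q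
  by_cases hj : j = i'
  · subst hj
    simp [hb, coproduct_basis, Algebra.TensorProduct.tmul_mul_tmul]
  · simp [hb, hj, coproduct_basis, Algebra.TensorProduct.tmul_mul_tmul]

theorem coproduct_coassoc_basis (a : k) (p) :
    TensorProduct.assoc k A A A ((coproduct b a).rTensor A (coproduct b a (b p))) =
      (coproduct b a).lTensor A (coproduct b a (b p)) := by
  obtain ⟨⟨i, j⟩, h⟩ := p
  simp only [coproduct_basis, map_smul, LinearMap.rTensor_tmul, LinearMap.lTensor_tmul,
    TensorProduct.assoc_tmul, ← smul_tmul', tmul_smul, smul_smul]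

end LinearQuiver

theorem pathAlgebra_linearQuiver_nearlyFrobenius_general (k : Type*) [Field k] (n : ℕ)
    (A : Type*) [Ring A] [Algebra k A]
    (b : Module.Basis {p : Fin (n + 1) × Fin (n + 1) // p.1 ≤ p.2} k A)
    (hmul : ∀ (i j i' j' : Fin (n + 1)) (h : i ≤ j) (h' : i' ≤ j'),
      b ⟨(i, j), h⟩ * b ⟨(i', j'), h'⟩ =
        if hj : j = i' then b ⟨(i, j'), h.trans (hj.trans_le h')⟩ else 0)
    (a : k) :
    ∃ Δ : A →ₗ[k] A ⊗[k] A,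
      (∀ (i j : Fin (n + 1)) (h : i ≤ j),
        Δ (b ⟨(i, j), h⟩) =
          a • (b ⟨(i, Fin.last n), Fin.le_last i⟩ ⊗ₜ[k] b ⟨(0, j), Fin.zero_le j⟩)) ∧
      (∀ c x d : A, Δ (c * x * d) = (c ⊗ₜ[k] (1 : A)) * Δ x * ((1 : A) ⊗ₜ[k] d)) ∧
      (∀ x : A, (TensorProduct.assoc k A A A) (LinearMap.rTensor A Δ (Δ x)) =
          LinearMap.lTensor A Δ (Δ x)) := by
  refine ⟨LinearQuiver.coproduct b a, LinearQuiver.coproduct_basis b a, fun c x d => ?_,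
    coassoc_of_basis (LinearQuiver.coproduct_coassoc_basis a)⟩
  rw [mul_assoc, map_mul_eq_tmul_one_mul_of_basis (LinearQuiver.coproduct_mul_left hmul a),
    map_mul_eq_mul_one_tmul_of_basis (LinearQuiver.coproduct_mul_right hmul a), mul_assoc]

/-- Let `A` be the path algebra of the linear quiver
`A_{n+1} : 0 → 1 → ⋯ → n`, presented by a basis `b (i,j)` (for `i ≤ j`) of paths from
vertex `i` to vertex `j`, with concatenation product and `1 = Σ_i b (i,i)`.  For any
`a ∈ k` the map `Δ(b (i,j)) = a • b (i, n) ⊗ b (0, j)` (i.e.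
`Δ(α_i⋯α_j) = a·(α_i⋯α_{n-1}) ⊗ (α_1⋯α_j)` in the notation of the paper) is a
coassociative `A`-bimodule map, i.e. a nearly Frobenius coproduct on `A`. -/
theorem pathAlgebra_linearQuiver_nearlyFrobenius (k : Type*) [Field k] (n : ℕ)
    (A : Type*) [Ring A] [Algebra k A]
    (b : Module.Basis {p : Fin (n + 1) × Fin (n + 1) // p.1 ≤ p.2} k A)
    (hmul : ∀ (i j i' j' : Fin (n + 1)) (h : i ≤ j) (h' : i' ≤ j'),
      b ⟨(i, j), h⟩ * b ⟨(i', j'), h'⟩ =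
        if hj : j = i' then b ⟨(i, j'), h.trans (hj.trans_le h')⟩ else 0)
    (hone : (1 : A) = ∑ i : Fin (n + 1), b ⟨(i, i), le_refl i⟩)
    (a : k) :
    ∃ Δ : A →ₗ[k] A ⊗[k] A,
      (∀ (i j : Fin (n + 1)) (h : i ≤ j),
        Δ (b ⟨(i, j), h⟩) =
          a • (b ⟨(i, Fin.last n), Fin.le_last i⟩ ⊗ₜ[k] b ⟨(0, j), Fin.zero_le j⟩)) ∧
      (∀ c x d : A, Δ (c * x * d) = (c ⊗ₜ[k] (1 : A)) * Δ x * ((1 : A) ⊗ₜ[k] d)) ∧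
      (∀ x : A, (TensorProduct.assoc k A A A) (LinearMap.rTensor A Δ (Δ x)) =
          LinearMap.lTensor A Δ (Δ x)) :=
  pathAlgebra_linearQuiver_nearlyFrobenius_general k n A b hmul a
end
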